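/- arXiv:2004.06024 — 7 statements merged into one kernel-verified Lean document; each statement's English description precedes it below -/
import Mathlib

section
/- Every finite real hyperplane arrangement admits a valid order. That is, if A is a finite set of affine hyperplanes in ℝ^n with chambers C_1, …, C_t (in some enumeration), then there exists an enumeration (a bijection Fin t → Ch(A), written i ↦ C_i) such that for every i ∈ {1, …, t}, the set ⋂_{j < i} ( ⋃_{H ∈ Sep(C_i, C_j)} H ) is a nonempty affine subspace of ℝ^n (where for i = 1 the empty intersection is all of ℝ^n). -/
open Set

/-- An affine hyperplane in `ℝ^n`, the zero set of the non-constant affine functional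
`x ↦ ∑ i, normal i * x i + const`. -/
structure Hyperplane (n : ℕ) where
  normal : Fin n → ℝ
  const : ℝ
  normal_ne : normal ≠ 0

namespace Hyperplane

/-- The hyperplane as a subset of `ℝ^n`. -/
def carrier {n : ℕ} (H : Hyperplane n) : Set (Fin n → ℝ) :=
  {x | ∑ i, H.normal i * x i + H.const = 0}

/-- The complexification `H_ℂ ⊆ ℂ^n`: zero set of the `ℂ`-affine extension. -/
def carrierC {n : ℕ} (H : Hyperplane n) : Set (Fin n → ℂ) :=
  {x | ∑ i, (H.normal i : ℂ) * x i + (H.const : ℂ) = 0}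

end Hyperplane

/-- The complement `ℝ^n ∖ ⋃_{H ∈ A} H` of the arrangement `A`. -/
def complSet {n : ℕ} (A : Set (Hyperplane n)) : Set (Fin n → ℝ) :=
  {x | ∀ H ∈ A, x ∉ H.carrier}

/-- `C` is a chamber of the arrangement `A`: a connected component of the complement. -/
def IsChamber {n : ℕ} (A : Set (Hyperplane n)) (C : Set (Fin n → ℝ)) : Prop :=
  ∃ x ∈ complSet A, C = connectedComponentIn (complSet A) x

/-- `H` separates `C` from `D`: they lie in different connected components of `ℝ^n ∖ H`. -/
def Separates {n : ℕ} (H : Hyperplane n) (C D : Set (Fin n → ℝ)) : Prop :=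
  ∀ x ∈ C, ∀ y ∈ D,
    connectedComponentIn H.carrierᶜ x ≠ connectedComponentIn H.carrierᶜ y

/-- `SepSet A C D`: the set of hyperplanes of `A` separating `C` from `D`. -/
def SepSet {n : ℕ} (A : Set (Hyperplane n)) (C D : Set (Fin n → ℝ)) : Set (Hyperplane n) :=
  {H | H ∈ A ∧ Separates H C D}

/-- `z` lies on the `C`-side of `H`: `z ∉ H` and `z`, `C` lie in the same
connected component of `ℝ^n ∖ H`. -/
def SameSide {n : ℕ} (H : Hyperplane n) (C : Set (Fin n → ℝ)) (z : Fin n → ℝ) : Prop :=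
  z ∉ H.carrier ∧ C ⊆ connectedComponentIn H.carrierᶜ z

/-- The type of chambers of `A`. -/
abbrev Chambers (n : ℕ) (A : Set (Hyperplane n)) : Type :=
  {C : Set (Fin n → ℝ) // IsChamber A C}

namespace ValidOrder

attribute [local instance] Classical.propDecidable

variable {n : ℕ}

/-- dot product on `Fin n → ℝ`. -/
def dotp (u w : Fin n → ℝ) : ℝ := ∑ i, u i * w i

/-- the affine functional of a hyperplane. -/
def fval (H : Hyperplane n) (x : Fin n → ℝ) : ℝ := ∑ i, H.normal i * x i + H.const

lemma mem_carrier_iff {H : Hyperplane n} {x : Fin n → ℝ} :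
    x ∈ H.carrier ↔ fval H x = 0 := Iff.rfl

lemma dotp_comm (u w : Fin n → ℝ) : dotp u w = dotp w u := by
  unfold dotp; exact Finset.sum_congr rfl fun i _ => mul_comm _ _

lemma dotp_add_right (u w₁ w₂ : Fin n → ℝ) :
    dotp u (w₁ + w₂) = dotp u w₁ + dotp u w₂ := by
  unfold dotp; rw [← Finset.sum_add_distrib]
  exact Finset.sum_congr rfl fun i _ => by simp [mul_add]

lemma dotp_add_left (u₁ u₂ w : Fin n → ℝ) :
    dotp (u₁ + u₂) w = dotp u₁ w + dotp u₂ w := by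
  rw [dotp_comm, dotp_add_right, dotp_comm w u₁, dotp_comm w u₂]

lemma dotp_smul_right (c : ℝ) (u w : Fin n → ℝ) :
    dotp u (c • w) = c * dotp u w := by
  unfold dotp; rw [Finset.mul_sum]
  exact Finset.sum_congr rfl fun i _ => by simp [Pi.smul_apply]; ring

lemma dotp_smul_left (c : ℝ) (u w : Fin n → ℝ) :
    dotp (c • u) w = c * dotp u w := by
  rw [dotp_comm, dotp_smul_right, dotp_comm]

lemma dotp_neg_left (u w : Fin n → ℝ) : dotp (-u) w = - dotp u w := by
  have := dotp_smul_left (-1) u w; simpa using this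

lemma dotp_sub_right (u w₁ w₂ : Fin n → ℝ) :
    dotp u (w₁ - w₂) = dotp u w₁ - dotp u w₂ := by
  have h := dotp_add_right u w₂ (w₁ - w₂); simp at h; linarith

lemma dotp_self_nonneg (u : Fin n → ℝ) : 0 ≤ dotp u u :=
  Finset.sum_nonneg fun i _ => mul_self_nonneg _

lemma dotp_self_eq_zero {u : Fin n → ℝ} (h : dotp u u = 0) : u = 0 := by
  funext i
  have h2 : ∀ j ∈ Finset.univ, (0:ℝ) ≤ u j * u j := fun j _ => mul_self_nonneg _
  have := (Finset.sum_eq_zero_iff_of_nonneg h2).1 h i (Finset.mem_univ i)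
  have := mul_self_eq_zero.1 this
  simpa using this

lemma dotp_zero_right (u : Fin n → ℝ) : dotp u 0 = 0 := by
  unfold dotp; simp

lemma fval_add (H : Hyperplane n) (x w : Fin n → ℝ) :
    fval H (x + w) = fval H x + dotp H.normal w := by
  unfold fval dotp
  rw [add_right_comm, ← Finset.sum_add_distrib]
  congr 1
  · exact Finset.sum_congr rfl fun i _ => by simp [mul_add]

lemma fval_add_smul (H : Hyperplane n) (x w : Fin n → ℝ) (c : ℝ) :
    fval H (x + c • w) = fval H x + c * dotp H.normal w := by
  rw [fval_add, dotp_smul_right]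

lemma fval_sub_eq (H : Hyperplane n) (x y : Fin n → ℝ) :
    fval H y - fval H x = dotp H.normal (y - x) := by
  have := fval_add H x (y - x); simp at this; linarith

lemma continuous_fval (H : Hyperplane n) : Continuous (fval H) := by
  unfold fval
  exact (continuous_finset_sum _ fun i _ => (continuous_const.mul (continuous_apply i))).add
    continuous_const

/-- affine combination. -/
lemma fval_combo (H : Hyperplane n) (x y : Fin n → ℝ) {a b : ℝ} (hab : a + b = 1) :
    fval H (a • x + b • y) = a * fval H x + b * fval H y := by
  unfold fval
  have : ∀ i ∈ Finset.univ, H.normal i * (a • x + b • y) i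
      = a * (H.normal i * x i) + b * (H.normal i * y i) := by
    intro i _; simp [Pi.add_apply, Pi.smul_apply]; ring
  rw [Finset.sum_congr rfl this, Finset.sum_add_distrib, ← Finset.mul_sum, ← Finset.mul_sum]
  have hb : b = 1 - a := by linarith
  subst hb; ring

/-- The sign cell of a point. -/
def cell (A : Set (Hyperplane n)) (c : Fin n → ℝ) : Set (Fin n → ℝ) :=
  {y | ∀ H ∈ A, 0 < fval H y * fval H c}

lemma mem_cell_self {A : Set (Hyperplane n)} {c : Fin n → ℝ} (hc : c ∈ complSet A) :
    c ∈ cell A c := fun H hH => mul_self_pos.2 (hc H hH)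

lemma cell_subset_complSet {A : Set (Hyperplane n)} {c : Fin n → ℝ} :
    cell A c ⊆ complSet A := by
  intro y hy H hH
  have := hy H hH
  intro hc
  rw [mem_carrier_iff] at hc
  rw [hc] at this; simp at this

lemma isOpen_cell {A : Set (Hyperplane n)} (hA : A.Finite) (c : Fin n → ℝ) :
    IsOpen (cell A c) := by
  have : cell A c = ⋂ H ∈ A, {y | 0 < fval H y * fval H c} := by
    ext y; simp [cell]
  rw [this]
  exact hA.isOpen_biInter fun H _ =>
    isOpen_lt continuous_const ((continuous_fval H).mul continuous_const)

lemma convex_cell {A : Set (Hyperplane n)} (c : Fin n → ℝ) :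
    Convex ℝ (cell A c) := by
  have : cell A c = ⋂ H ∈ A, {y | 0 < fval H y * fval H c} := by
    ext y; simp [cell]
  rw [this]
  refine convex_iInter fun H => convex_iInter fun _ => ?_
  intro x hx y hy a b ha hb hab
  simp only [mem_setOf_eq] at hx hy ⊢
  rw [fval_combo H x y hab, add_mul]
  rcases eq_or_lt_of_le ha with h | h
  · have hb1 : b = 1 := by linarith
    rw [← h, hb1]; simpa using hy
  · have h1 : 0 < a * (fval H x * fval H c) := by positivity
    have h2 : 0 ≤ b * (fval H y * fval H c) := by positivity
    nlinarith

lemma connectedComponentIn_eq_cell {A : Set (Hyperplane n)} (hA : A.Finite)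
    {c : Fin n → ℝ} (hc : c ∈ complSet A) :
    connectedComponentIn (complSet A) c = cell A c := by
  apply Subset.antisymm
  · -- component ⊆ cell
    intro y hy
    by_contra hyc
    have hysub : y ∈ complSet A := connectedComponentIn_subset _ _ hy
    obtain ⟨H, hH, hsign⟩ : ∃ H ∈ A, ¬ (0 < fval H y * fval H c) := by
      by_contra h; push_neg at h; exact hyc h
    have hy0 : fval H y ≠ 0 := hysub H hH
    have hc0 : fval H c ≠ 0 := hc H hH
    have hneg : fval H y * fval H c < 0 :=
      lt_of_le_of_ne (le_of_not_gt hsign) (mul_ne_zero hy0 hc0)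
    have hpre := isPreconnected_connectedComponentIn (F := complSet A) (x := c)
    have hcon := hpre {z | 0 < fval H z * fval H c} {z | fval H z * fval H c < 0}
      (isOpen_lt continuous_const ((continuous_fval H).mul continuous_const))
      (isOpen_lt ((continuous_fval H).mul continuous_const) continuous_const)
      (by
        intro z hz
        have hz0 : fval H z ≠ 0 := (connectedComponentIn_subset _ _ hz) H hH
        rcases lt_or_gt_of_ne (mul_ne_zero hz0 hc0) with h | h
        · exact Or.inr h
        · exact Or.inl h)
      ⟨c, mem_connectedComponentIn hc, mul_self_pos.2 hc0⟩
      ⟨y, hy, hneg⟩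
    obtain ⟨z, _, hz1, hz2⟩ := hcon
    simp only [mem_setOf_eq] at hz1 hz2
    linarith
  · exact (convex_cell c).isPreconnected.subset_connectedComponentIn
      (mem_cell_self hc) cell_subset_complSet

lemma isChamber_iff {A : Set (Hyperplane n)} (hA : A.Finite) {C : Set (Fin n → ℝ)} :
    IsChamber A C ↔ ∃ c ∈ complSet A, C = cell A c := by
  constructor
  · rintro ⟨c, hc, rfl⟩; exact ⟨c, hc, connectedComponentIn_eq_cell hA hc⟩
  · rintro ⟨c, hc, rfl⟩; exact ⟨c, hc, (connectedComponentIn_eq_cell hA hc).symm⟩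

/-- sign transfer: same cell iff same signs everywhere -/
lemma cell_eq_of_mem {A : Set (Hyperplane n)} {c d : Fin n → ℝ}
    (hd : d ∈ cell A c) : cell A d = cell A c := by
  ext y
  constructor
  · intro hy H hH
    have h1 := hy H hH; have h2 := hd H hH
    nlinarith [sq_nonneg (fval H d)]
  · intro hy H hH
    have h1 := hy H hH; have h2 := hd H hH
    nlinarith [sq_nonneg (fval H c)]

/-- complSet of a singleton is the complement of the carrier -/
lemma complSet_singleton (H : Hyperplane n) : complSet {H} = H.carrierᶜ := by
  ext x; simp [complSet]

lemma connectedComponentIn_compl_carrier {H : Hyperplane n} {a : Fin n → ℝ}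
    (ha : a ∉ H.carrier) :
    connectedComponentIn H.carrierᶜ a = {z | 0 < fval H z * fval H a} := by
  have hfin : (({H} : Set (Hyperplane n))).Finite := finite_singleton H
  have hmem : a ∈ complSet {H} := by rw [complSet_singleton]; exact ha
  have := connectedComponentIn_eq_cell hfin hmem
  rw [complSet_singleton] at this
  rw [this]
  ext z; simp [cell]

lemma separates_iff {A : Set (Hyperplane n)} {H : Hyperplane n} {c d : Fin n → ℝ}
    (hc : c ∈ complSet A) (hd : d ∈ complSet A) (hH : H ∈ A) :
    Separates H (cell A c) (cell A d) ↔ fval H c * fval H d < 0 := by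
  have hc0 : fval H c ≠ 0 := hc H hH
  have hd0 : fval H d ≠ 0 := hd H hH
  constructor
  · intro hsep
    by_contra hge
    have hpos : 0 < fval H c * fval H d :=
      lt_of_le_of_ne (le_of_not_gt hge) (Ne.symm (mul_ne_zero hc0 hd0))
    apply hsep c (mem_cell_self hc) d (mem_cell_self hd)
    rw [connectedComponentIn_compl_carrier (show c ∉ H.carrier from hc H hH),
        connectedComponentIn_compl_carrier (show d ∉ H.carrier from hd H hH)]
    ext z; constructor
    · intro hz; simp only [mem_setOf_eq] at hz ⊢; nlinarith [sq_nonneg (fval H c)]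
    · intro hz; simp only [mem_setOf_eq] at hz ⊢; nlinarith [sq_nonneg (fval H d)]
  · intro hlt x hx y hy
    have hx1 := hx H hH
    have hy1 := hy H hH
    have hx0 : fval H x ≠ 0 := by intro h; rw [h] at hx1; simp at hx1
    have hy0 : fval H y ≠ 0 := by intro h; rw [h] at hy1; simp at hy1
    rw [connectedComponentIn_compl_carrier (show x ∉ H.carrier from fun h => hx0 h),
        connectedComponentIn_compl_carrier (show y ∉ H.carrier from fun h => hy0 h)]
    intro heq
    have hxy : x ∈ {z | 0 < fval H z * fval H y} := by
      rw [← heq]; exact mul_self_pos.2 hx0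
    simp only [mem_setOf_eq] at hxy
    nlinarith


/-- closed cell -/
def pcell (A : Set (Hyperplane n)) (c : Fin n → ℝ) : Set (Fin n → ℝ) :=
  {y | ∀ H ∈ A, 0 ≤ fval H y * fval H c}

lemma cell_subset_pcell {A : Set (Hyperplane n)} {c : Fin n → ℝ} :
    cell A c ⊆ pcell A c := fun y hy H hH => le_of_lt (hy H hH)

lemma isClosed_pcell {A : Set (Hyperplane n)} (c : Fin n → ℝ) :
    IsClosed (pcell A c) := by
  have : pcell A c = ⋂ H ∈ A, {y | 0 ≤ fval H y * fval H c} := by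
    ext y; simp [pcell]
  rw [this]
  exact isClosed_biInter fun H _ =>
    isClosed_le continuous_const ((continuous_fval H).mul continuous_const)

/-- squared distance -/
def qd (p y : Fin n → ℝ) : ℝ := dotp (p - y) (p - y)

lemma qd_nonneg (p y : Fin n → ℝ) : 0 ≤ qd p y := dotp_self_nonneg _

lemma qd_eq_zero {p y : Fin n → ℝ} (h : qd p y = 0) : y = p := by
  have := dotp_self_eq_zero h
  have : p - y = 0 := this
  funext i
  have := congrFun this i
  simp at this; linarith [this]

lemma continuous_qd (p : Fin n → ℝ) : Continuous (qd p) := by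
  unfold qd dotp
  refine continuous_finset_sum _ fun i _ => ?_
  have : Continuous fun y : Fin n → ℝ => p i - y i :=
    continuous_const.sub (continuous_apply i)
  exact this.mul this

lemma qd_expand (p x y : Fin n → ℝ) :
    qd p y = qd p x - 2 * dotp (p - x) (y - x) + dotp (y - x) (y - x) := by
  unfold qd dotp
  have h : ∀ i ∈ Finset.univ, ((p - y) i * (p - y) i)
      = (((p-x) i * (p-x) i) - 2*((p-x) i * (y-x) i)) + ((y-x) i * (y-x) i) := by
    intro i _; simp only [Pi.sub_apply]; ring
  rw [Finset.sum_congr rfl h, Finset.sum_add_distrib, Finset.sum_sub_distrib,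
    ← Finset.mul_sum]

/-- existence of a minimizer of `qd p` on a nonempty closed set -/
lemma exists_foot (p : Fin n → ℝ) {P : Set (Fin n → ℝ)} (hP : IsClosed P)
    {c : Fin n → ℝ} (hc : c ∈ P) :
    ∃ x ∈ P, ∀ y ∈ P, qd p x ≤ qd p y := by
  set r : ℝ := Real.sqrt (qd p c) with hr
  have hr0 : 0 ≤ r := Real.sqrt_nonneg _
  set K : Set (Fin n → ℝ) := P ∩ {y | qd p y ≤ qd p c} with hK
  have hKc : IsClosed K := hP.inter (isClosed_le (continuous_qd p) continuous_const)
  have hKsub : K ⊆ Metric.closedBall p r := by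
    intro y hy
    rw [Metric.mem_closedBall]
    rw [dist_pi_le_iff hr0]
    intro i
    have h1 : (p i - y i) * (p i - y i) ≤ qd p y := by
      have := Finset.single_le_sum (f := fun j => (p - y) j * (p - y) j)
        (fun j _ => mul_self_nonneg _) (Finset.mem_univ i)
      simpa [qd, dotp] using this
    obtain ⟨hy1, hy2⟩ := hy
    simp only [mem_setOf_eq] at hy2
    have h2 : (p i - y i) * (p i - y i) ≤ qd p c := le_trans h1 hy2
    have h3 : |p i - y i| ≤ r := by
      rw [hr, ← Real.sqrt_mul_self_eq_abs]
      exact Real.sqrt_le_sqrt h2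
    rw [Real.dist_eq, abs_sub_comm]
    exact h3
  have hKcomp : IsCompact K :=
    (isCompact_closedBall p r).of_isClosed_subset hKc hKsub
  have hcK : c ∈ K := by
    refine ⟨hc, ?_⟩
    simp only [mem_setOf_eq]
    exact le_rfl
  have hKne : K.Nonempty := ⟨c, hcK⟩
  obtain ⟨x, hxK, hxmin⟩ := hKcomp.exists_isMinOn hKne ((continuous_qd p).continuousOn)
  rw [isMinOn_iff] at hxmin
  refine ⟨x, hxK.1, fun y hy => ?_⟩
  by_cases hyK : y ∈ K
  · exact hxmin y hyK
  · have hgt : ¬ qd p y ≤ qd p c := fun h => hyK ⟨hy, h⟩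
    push_neg at hgt
    exact le_trans (hxmin c hcK) (le_of_lt hgt)

/-- variational inequality at the minimizer for admissible directions -/
lemma foot_dir_le (p : Fin n → ℝ) {P : Set (Fin n → ℝ)} {x : Fin n → ℝ}
    (hmin : ∀ y ∈ P, qd p x ≤ qd p y) {w : Fin n → ℝ} {ε₀ : ℝ}
    (hε₀ : 0 < ε₀) (hdir : ∀ ε : ℝ, 0 < ε → ε < ε₀ → x + ε • w ∈ P) :
    dotp (p - x) w ≤ 0 := by
  by_contra hpos
  push_neg at hpos
  set dvw := dotp (p - x) w with hdvw
  set ww := dotp w w with hww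
  have hww0 : 0 ≤ ww := dotp_self_nonneg w
  set ε := min (ε₀ / 2) (dvw / (ww + 1)) with hε
  have hε1 : 0 < ε := lt_min (by linarith) (div_pos hpos (by linarith))
  have hε2 : ε < ε₀ := lt_of_le_of_lt (min_le_left _ _) (by linarith)
  have hmem := hdir ε hε1 hε2
  have key : qd p (x + ε • w) = qd p x - 2*(ε*dvw) + ε*(ε*ww) := by
    rw [qd_expand p x (x + ε • w)]
    have hsimp : (x + ε • w) - x = ε • w := by abel
    rw [hsimp, dotp_smul_right, dotp_smul_left, dotp_smul_right]
  have h1 : 0 ≤ -2*(ε*dvw) + ε*(ε*ww) := by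
    have := hmin _ hmem; rw [key] at this; linarith
  have h2 : ε * (ww+1) ≤ dvw := by
    have hmr : ε ≤ dvw/(ww+1) := min_le_right _ _
    calc ε * (ww+1) ≤ (dvw/(ww+1)) * (ww+1) := by
          apply mul_le_mul_of_nonneg_right hmr; linarith
    _ = dvw := by field_simp
  nlinarith [hε1, hpos, hww0]

lemma dotp_sub_left (u₁ u₂ w : Fin n → ℝ) :
    dotp (u₁ - u₂) w = dotp u₁ w - dotp u₂ w := by
  rw [dotp_comm, dotp_sub_right, dotp_comm w u₁, dotp_comm w u₂]

/-- Farkas' lemma, by induction on the number of generators. -/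
lemma farkas {ι : Type*} [DecidableEq ι] :
    ∀ (k : ℕ) (s : Finset ι), s.card ≤ k → ∀ (G : ι → Fin n → ℝ) (v : Fin n → ℝ),
    (∀ w, (∀ i ∈ s, dotp (G i) w ≤ 0) → dotp v w ≤ 0) →
    ∃ lam : ι → ℝ, (∀ i ∈ s, 0 ≤ lam i) ∧ v = ∑ i ∈ s, lam i • G i := by
  have base : ∀ (s : Finset ι), s = ∅ → ∀ (G : ι → Fin n → ℝ) (v : Fin n → ℝ),
      (∀ w, (∀ i ∈ s, dotp (G i) w ≤ 0) → dotp v w ≤ 0) →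
      ∃ lam : ι → ℝ, (∀ i ∈ s, 0 ≤ lam i) ∧ v = ∑ i ∈ s, lam i • G i := by
    intro s hs G v h
    subst hs
    have hv : dotp v v ≤ 0 := h v (by simp)
    have hv0 : v = 0 := dotp_self_eq_zero (le_antisymm hv (dotp_self_nonneg v))
    exact ⟨fun _ => 0, by simp, by simp [hv0]⟩
  intro k
  induction k with
  | zero =>
    intro s hcard G v h
    exact base s (Finset.card_eq_zero.1 (Nat.le_zero.1 hcard)) G v h
  | succ k ih =>
    intro s hcard G v h
    rcases s.eq_empty_or_nonempty with hs | ⟨i₀, hi₀⟩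
    · exact base s hs G v h
    set s' := s.erase i₀ with hs'
    have hcard' : s'.card ≤ k := by
      have h1 : s'.card = s.card - 1 := by rw [hs']; exact Finset.card_erase_of_mem hi₀
      have h2 : 0 < s.card := Finset.card_pos.2 ⟨i₀, hi₀⟩
      omega
    by_cases hcase : ∀ w, (∀ i ∈ s', dotp (G i) w ≤ 0) → dotp v w ≤ 0
    · obtain ⟨lam, hlam0, hlam⟩ := ih s' hcard' G v hcase
      refine ⟨Function.update lam i₀ 0, ?_, ?_⟩
      · intro i hi
        by_cases hii : i = i₀
        · subst hii; simp
        · rw [Function.update_of_ne hii]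
          exact hlam0 i (Finset.mem_erase.2 ⟨hii, hi⟩)
      · rw [← Finset.add_sum_erase _ _ hi₀, ← hs']
        have : ∑ i ∈ s', Function.update lam i₀ 0 i • G i = ∑ i ∈ s', lam i • G i := by
          refine Finset.sum_congr rfl fun i hi => ?_
          rw [Function.update_of_ne (Finset.mem_erase.1 hi).1]
        rw [this, Function.update_self]
        simpa using hlam
    · push_neg at hcase
      obtain ⟨u, hu1, hu2⟩ := hcase
      set g : ℝ := dotp (G i₀) u with hg
      have hg0 : 0 < g := by
        by_contra hng
        push_neg at hng
        have : ∀ i ∈ s, dotp (G i) u ≤ 0 := by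
          intro i hi
          by_cases hii : i = i₀
          · subst hii; exact hng
          · exact hu1 i (Finset.mem_erase.2 ⟨hii, hi⟩)
        linarith [h u this]
      set T : (Fin n → ℝ) → (Fin n → ℝ) :=
        fun y => y - (dotp y u / g) • G i₀ with hT
      have key : ∀ y w : Fin n → ℝ,
          dotp (T y) w = dotp y (w - (dotp (G i₀) w / g) • u) := by
        intro y w
        rw [hT]
        simp only
        rw [dotp_sub_left, dotp_smul_left, dotp_sub_right, dotp_smul_right]
        field_simp
      have hyp' : ∀ w, (∀ i ∈ s', dotp (T (G i)) w ≤ 0) → dotp (T v) w ≤ 0 := by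
        intro w hw
        set wt := w - (dotp (G i₀) w / g) • u with hwt
        have hws : ∀ i ∈ s, dotp (G i) wt ≤ 0 := by
          intro i hi
          by_cases hii : i = i₀
          · subst hii
            rw [hwt, dotp_sub_right, dotp_smul_right]
            rw [← hg]
            field_simp
            simp
          · have := hw i (Finset.mem_erase.2 ⟨hii, hi⟩)
            rw [key (G i) w] at this
            exact this
        have := h wt hws
        rw [key v w]
        exact this
      obtain ⟨lam, hlam0, hlam⟩ := ih s' hcard' (fun i => T (G i)) (T v) hyp'
      set μ : ℝ := dotp v u / g - ∑ i ∈ s', lam i * (dotp (G i) u / g) with hμ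
      have hμ0 : 0 ≤ μ := by
        have h1 : ∀ i ∈ s', 0 ≤ lam i * (- dotp (G i) u) := by
          intro i hi
          have := hu1 i hi
          have := hlam0 i hi
          nlinarith
        have h2 : ∑ i ∈ s', lam i * (dotp (G i) u) ≤ 0 := by
          have := Finset.sum_nonneg h1
          have heq : ∑ i ∈ s', lam i * (-dotp (G i) u) = - ∑ i ∈ s', lam i * (dotp (G i) u) := by
            rw [← Finset.sum_neg_distrib]
            exact Finset.sum_congr rfl fun i _ => by ring
          rw [heq] at this
          linarith
        rw [hμ]
        have hsum : ∑ i ∈ s', lam i * (dotp (G i) u / g) = (∑ i ∈ s', lam i * dotp (G i) u) / g := by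
          rw [Finset.sum_div]
          exact Finset.sum_congr rfl fun i _ => by ring
        rw [hsum]
        have : 0 < dotp v u / g := div_pos hu2 hg0
        have : (∑ i ∈ s', lam i * dotp (G i) u) / g ≤ 0 :=
          div_nonpos_of_nonpos_of_nonneg h2 (le_of_lt hg0)
        linarith
      refine ⟨Function.update lam i₀ μ, ?_, ?_⟩
      · intro i hi
        by_cases hii : i = i₀
        · subst hii; simpa using hμ0
        · rw [Function.update_of_ne hii]
          exact hlam0 i (Finset.mem_erase.2 ⟨hii, hi⟩)
      · rw [← Finset.add_sum_erase _ _ hi₀, ← hs']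
        have hre : ∑ i ∈ s', Function.update lam i₀ μ i • G i = ∑ i ∈ s', lam i • G i := by
          refine Finset.sum_congr rfl fun i hi => ?_
          rw [Function.update_of_ne (Finset.mem_erase.1 hi).1]
        rw [hre, Function.update_self]
        -- v = μ • G i₀ + ∑ i ∈ s', lam i • G i
        have hTsum : ∑ i ∈ s', lam i • T (G i)
            = (∑ i ∈ s', lam i • G i) - (∑ i ∈ s', lam i * (dotp (G i) u / g)) • G i₀ := by
          rw [Finset.sum_smul, ← Finset.sum_sub_distrib]
          refine Finset.sum_congr rfl fun i hi => ?_
          rw [hT]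
          simp only
          rw [smul_sub, smul_smul]
        have hvT : v = T v + (dotp v u / g) • G i₀ := by
          rw [hT]; simp only; abel
        rw [hvT, hlam, hTsum, hμ, sub_smul]
        abel
  
/-- kernel of the dot product with `a` -/
def kerV (a : Fin n → ℝ) : Submodule ℝ (Fin n → ℝ) where
  carrier := {u | dotp a u = 0}
  add_mem' := by intro u v hu hv; simp only [mem_setOf_eq] at *; rw [dotp_add_right]; linarith
  zero_mem' := by simp only [mem_setOf_eq]; exact dotp_zero_right a
  smul_mem' := by intro c u hu; simp only [mem_setOf_eq] at *; rw [dotp_smul_right, hu, mul_zero]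

lemma mem_kerV {a u : Fin n → ℝ} : u ∈ kerV a ↔ dotp a u = 0 := Iff.rfl

/-- common kernel of normals of a finite set of hyperplanes -/
def DT (T : Finset (Hyperplane n)) : Submodule ℝ (Fin n → ℝ) where
  carrier := {u | ∀ H ∈ T, dotp H.normal u = 0}
  add_mem' := by
    intro u v hu hv H hH
    rw [dotp_add_right, hu H hH, hv H hH, add_zero]
  zero_mem' := fun H _ => dotp_zero_right _
  smul_mem' := by
    intro c u hu H hH
    rw [dotp_smul_right, hu H hH, mul_zero]

lemma mem_DT {T : Finset (Hyperplane n)} {u : Fin n → ℝ} :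
    u ∈ DT T ↔ ∀ H ∈ T, dotp H.normal u = 0 := Iff.rfl

/-- span of the normals -/
def SpanT (T : Finset (Hyperplane n)) : Submodule ℝ (Fin n → ℝ) :=
  Submodule.span ℝ {a | ∃ H ∈ T, a = H.normal}

lemma spanT_orth {T : Finset (Hyperplane n)} {u w : Fin n → ℝ}
    (hu : u ∈ SpanT T) (hw : w ∈ DT T) : dotp u w = 0 := by
  induction hu using Submodule.span_induction with
  | mem a ha => obtain ⟨H, hH, rfl⟩ := ha; exact hw H hH
  | zero => rw [dotp_comm]; exact dotp_zero_right _
  | add a b _ _ iha ihb => rw [dotp_add_left, iha, ihb, add_zero]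
  | smul c a _ iha => rw [dotp_smul_left, iha, mul_zero]

lemma spanT_inf_DT {T : Finset (Hyperplane n)} {u : Fin n → ℝ}
    (hu : u ∈ SpanT T) (hw : u ∈ DT T) : u = 0 :=
  dotp_self_eq_zero (spanT_orth hu hw)

/-- Baire-type avoidance: finitely many proper affine cosets cannot cover. -/
lemma avoid {ι : Type*} (s : Finset ι) (q : ι → (Fin n → ℝ))
    (U : ι → Submodule ℝ (Fin n → ℝ)) (hU : ∀ i ∈ s, U i ≠ ⊤) :
    ∃ p : Fin n → ℝ, ∀ i ∈ s, p - q i ∉ U i := by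
  by_contra hcon
  push_neg at hcon
  have hcover : (⋃ i : s, {p : Fin n → ℝ | p - q i.1 ∈ U i.1}) = univ := by
    ext p; simp only [mem_iUnion, mem_setOf_eq, mem_univ, iff_true]
    obtain ⟨i, hi, hmem⟩ := hcon p
    exact ⟨⟨i, hi⟩, hmem⟩
  have hclosed : ∀ i : s, IsClosed {p : Fin n → ℝ | p - q i.1 ∈ U i.1} := by
    intro i
    have h1 : IsClosed ((U i.1 : Set (Fin n → ℝ))) := Submodule.closed_of_finiteDimensional _
    exact h1.preimage (continuous_id.sub continuous_const)
  obtain ⟨i, x, hx⟩ := nonempty_interior_of_iUnion_of_closed hclosed hcover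
  obtain ⟨ε, hε, hball⟩ := Metric.isOpen_iff.1 isOpen_interior x hx
  have hsub : Metric.ball x ε ⊆ {p : Fin n → ℝ | p - q i.1 ∈ U i.1} :=
    le_trans hball interior_subset
  apply hU i.1 i.2
  rw [Submodule.eq_top_iff']
  intro y
  set c : ℝ := ε / (2 * (‖y‖ + 1)) with hc
  have hy1 : (0:ℝ) ≤ ‖y‖ := norm_nonneg y
  have hc0 : 0 < c := by positivity
  have hz : x + c • y ∈ Metric.ball x ε := by
    rw [Metric.mem_ball, dist_eq_norm]
    have : x + c • y - x = c • y := by abel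
    rw [this, norm_smul, Real.norm_eq_abs, abs_of_pos hc0]
    have : c * ‖y‖ < ε := by
      rw [hc]
      rw [div_mul_eq_mul_div, div_lt_iff₀ (by positivity)]
      nlinarith
    exact this
  have h1 : (x + c • y) - q i.1 ∈ U i.1 := hsub hz
  have h2 : x - q i.1 ∈ U i.1 := hsub (Metric.mem_ball_self hε)
  have h3 : c • y ∈ U i.1 := by
    have : (x + c • y - q i.1) - (x - q i.1) = c • y := by abel
    rw [← this]
    exact Submodule.sub_mem _ h1 h2
  have := Submodule.smul_mem (U i.1) c⁻¹ h3
  rwa [smul_smul, inv_mul_cancel₀ (ne_of_gt hc0), one_smul] at this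

lemma nontrivial_V (hn : 1 ≤ n) : Nontrivial (Fin n → ℝ) := by
  refine ⟨0, Function.const _ 1, ?_⟩
  intro h
  have := congrFun h ⟨0, hn⟩
  simp [Function.const] at this

/-- the "bad" proposition for a pair (T, Hs) -/
def BadPair (T : Finset (Hyperplane n)) (Hs : Hyperplane n) : Prop :=
  (∃ x₀, (∀ H ∈ T, fval H x₀ = 0) ∧ fval Hs x₀ = 0) ∧
  (∃ z, (∀ H ∈ T, fval H z = 0) ∧ fval Hs z ≠ 0)

noncomputable def genQ (T : Finset (Hyperplane n)) (Hs : Hyperplane n) : Fin n → ℝ :=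
  if h : BadPair T Hs then h.1.choose else 0

noncomputable def genU (T : Finset (Hyperplane n)) (Hs : Hyperplane n) :
    Submodule ℝ (Fin n → ℝ) :=
  if BadPair T Hs then (DT T ⊓ kerV Hs.normal) ⊔ SpanT T else ⊥

lemma gen_spec {T : Finset (Hyperplane n)} {Hs : Hyperplane n} (h : BadPair T Hs) :
    ((∀ H ∈ T, fval H (genQ T Hs) = 0) ∧ fval Hs (genQ T Hs) = 0) ∧
    genU T Hs = (DT T ⊓ kerV Hs.normal) ⊔ SpanT T := by
  constructor
  · unfold genQ; rw [dif_pos h]; exact h.1.choose_spec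
  · unfold genU; rw [if_pos h]

lemma genU_ne_top (hn : 1 ≤ n) (T : Finset (Hyperplane n)) (Hs : Hyperplane n) :
    genU T Hs ≠ ⊤ := by
  have := nontrivial_V (n := n) hn
  by_cases h : BadPair T Hs
  · obtain ⟨⟨hq1, hq2⟩, hU⟩ := gen_spec h
    obtain ⟨z, hzT, hzH⟩ := h.2
    set x₀ := genQ T Hs with hx₀
    intro htop
    have hz : z - x₀ ∈ genU T Hs := by rw [htop]; trivial
    rw [hU] at hz
    obtain ⟨u₁, hu₁, u₂, hu₂, hsum⟩ := Submodule.mem_sup.1 hz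
    have hzDT : z - x₀ ∈ DT T := by
      intro H hH
      rw [← fval_sub_eq]
      rw [hzT H hH, hq1 H hH, sub_zero]
    have hu₂DT : u₂ ∈ DT T := by
      have : u₂ = (z - x₀) - u₁ := by rw [← hsum]; abel
      rw [this]
      exact Submodule.sub_mem _ hzDT (Submodule.mem_inf.1 hu₁).1
    have hu₂0 : u₂ = 0 := spanT_inf_DT hu₂ hu₂DT
    have : z - x₀ = u₁ := by rw [← hsum, hu₂0, add_zero]
    have hker : z - x₀ ∈ kerV Hs.normal := by
      rw [this]; exact (Submodule.mem_inf.1 hu₁).2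
    rw [mem_kerV, ← fval_sub_eq, hq2, sub_zero] at hker
    exact hzH hker
  · unfold genU; rw [if_neg h]; exact bot_ne_top

lemma dotp_self_ne_zero {a : Fin n → ℝ} (ha : a ≠ 0) : dotp a a ≠ 0 :=
  fun h => ha (dotp_self_eq_zero h)

/-- Existence of a generic point -/
lemma exists_generic (hn : 1 ≤ n) (A : Set (Hyperplane n)) (hA : A.Finite) :
    ∃ p : Fin n → ℝ, p ∈ complSet A ∧
      ∀ T : Finset (Hyperplane n), ↑T ⊆ A → ∀ Hs ∈ A, ∀ x z : Fin n → ℝ,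
        (∀ H ∈ T, fval H x = 0) → fval Hs x = 0 →
        (∀ H ∈ T, fval H z = 0) → fval Hs z ≠ 0 →
        p - x ∉ SpanT T := by
  classical
  set F := hA.toFinset with hF
  set s : Finset ((Hyperplane n) ⊕ (Finset (Hyperplane n) × Hyperplane n)) :=
    F.disjSum (F.powerset ×ˢ F) with hs
  set q : (Hyperplane n) ⊕ (Finset (Hyperplane n) × Hyperplane n) → (Fin n → ℝ) :=
    Sum.elim (fun H => ((-(H.const))/(dotp H.normal H.normal)) • H.normal)
      (fun TH => genQ TH.1 TH.2) with hq
  set U : (Hyperplane n) ⊕ (Finset (Hyperplane n) × Hyperplane n) → Submodule ℝ (Fin n → ℝ) :=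
    Sum.elim (fun H => kerV H.normal) (fun TH => genU TH.1 TH.2) with hU
  have hUt : ∀ i ∈ s, U i ≠ ⊤ := by
    rintro (H | TH) _
    · intro htop
      have : H.normal ∈ kerV H.normal := by
        have : H.normal ∈ (⊤ : Submodule ℝ (Fin n → ℝ)) := trivial
        rw [← htop] at this
        exact this
      exact dotp_self_ne_zero H.normal_ne (mem_kerV.1 this)
    · exact genU_ne_top hn TH.1 TH.2
  obtain ⟨p, hp⟩ := avoid s q U hUt
  refine ⟨p, ?_, ?_⟩
  · intro H hH hcar
    have hmem : Sum.inl H ∈ s := by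
      rw [hs]
      exact Finset.inl_mem_disjSum.2 (hA.mem_toFinset.2 hH)
    apply hp _ hmem
    rw [hU, hq]
    simp only [Sum.elim_inl]
    rw [mem_kerV, dotp_sub_right, dotp_smul_right]
    have hdd : dotp H.normal H.normal ≠ 0 := dotp_self_ne_zero H.normal_ne
    have h1 : dotp H.normal p = - H.const := by
      rw [mem_carrier_iff] at hcar
      unfold fval at hcar
      unfold dotp
      linarith
    rw [h1]
    field_simp
    ring
  · intro T hT Hs hHs x z hxT hxH hzT hzH hspan
    have hbad : BadPair T Hs := ⟨⟨x, hxT, hxH⟩, ⟨z, hzT, hzH⟩⟩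
    obtain ⟨⟨hq1, hq2⟩, hUeq⟩ := gen_spec hbad
    have hmem : Sum.inr (T, Hs) ∈ s := by
      rw [hs]
      refine Finset.inr_mem_disjSum.2 (Finset.mem_product.2 ⟨?_, ?_⟩)
      · exact Finset.mem_powerset.2 (fun H hH => hA.mem_toFinset.2 (hT hH))
      · exact hA.mem_toFinset.2 hHs
    apply hp _ hmem
    rw [hU, hq]
    simp only [Sum.elim_inr]
    rw [hUeq]
    have hdecomp : p - genQ T Hs = (x - genQ T Hs) + (p - x) := by abel
    rw [hdecomp]
    refine Submodule.add_mem _ (Submodule.mem_sup_left ?_) (Submodule.mem_sup_right hspan)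
    rw [Submodule.mem_inf]
    constructor
    · intro H hH
      rw [← fval_sub_eq, hxT H hH, hq1 H hH, sub_zero]
    · rw [mem_kerV, ← fval_sub_eq, hxH, hq2, sub_zero]

/-- admissible small ε for staying in the closed cell -/
lemma eps_admissible {A : Set (Hyperplane n)} (hA : A.Finite) {c x w : Fin n → ℝ}
    (hc : c ∈ complSet A) (hx : x ∈ pcell A c)
    (hw : ∀ H ∈ A, fval H x = 0 → 0 ≤ dotp H.normal w * fval H c) :
    ∃ ε₀ > 0, ∀ ε : ℝ, 0 < ε → ε < ε₀ → x + ε • w ∈ pcell A c := by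
  classical
  set F' := hA.toFinset.filter (fun H => fval H x ≠ 0) with hF'
  set f : Hyperplane n → ℝ :=
    fun H => (fval H x * fval H c) / (|dotp H.normal w * fval H c| + 1) with hf
  have hfpos : ∀ H ∈ F', 0 < f H := by
    intro H hH
    rw [hF', Finset.mem_filter] at hH
    obtain ⟨hHA, hHx⟩ := hH
    have hHA' : H ∈ A := hA.mem_toFinset.1 hHA
    have h1 : 0 ≤ fval H x * fval H c := hx H hHA'
    have h2 : fval H c ≠ 0 := hc H hHA'
    have h3 : 0 < fval H x * fval H c :=
      lt_of_le_of_ne h1 (Ne.symm (mul_ne_zero hHx h2))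
    rw [hf]
    positivity
  set ε₀ : ℝ := if h : F'.Nonempty then F'.inf' h f else 1 with hε₀
  have hε₀pos : 0 < ε₀ := by
    rw [hε₀]
    split_ifs with h
    · rw [Finset.lt_inf'_iff]
      intro H hH; exact hfpos H hH
    · norm_num
  refine ⟨ε₀, hε₀pos, ?_⟩
  intro ε hε1 hε2 H hHA
  rw [fval_add_smul, add_mul]
  by_cases hact : fval H x = 0
  · rw [hact, zero_mul, zero_add]
    have := hw H hHA hact
    nlinarith
  · have hHF : H ∈ F' := by
      rw [hF', Finset.mem_filter]
      exact ⟨hA.mem_toFinset.2 hHA, hact⟩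
    have hle : ε₀ ≤ f H := by
      rw [hε₀]
      rw [dif_pos ⟨H, hHF⟩]
      exact Finset.inf'_le f hHF
    have hεf : ε < f H := lt_of_lt_of_le hε2 hle
    have h1 : 0 ≤ fval H x * fval H c := hx H hHA
    have habs : |dotp H.normal w * fval H c| + 1 > 0 := by positivity
    have h3 : ε * (|dotp H.normal w * fval H c| + 1) < fval H x * fval H c := by
      rw [hf] at hεf
      calc ε * (|dotp H.normal w * fval H c| + 1)
          < (fval H x * fval H c / (|dotp H.normal w * fval H c| + 1))
            * (|dotp H.normal w * fval H c| + 1) := by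
            exact mul_lt_mul_of_pos_right hεf habs
        _ = fval H x * fval H c := by field_simp
    have h4 : |ε * (dotp H.normal w * fval H c)| < fval H x * fval H c := by
      rw [abs_mul, abs_of_pos hε1]
      nlinarith [abs_nonneg (dotp H.normal w * fval H c)]
    have := abs_lt.1 h4
    have expand : ε * dotp H.normal w * fval H c = ε * (dotp H.normal w * fval H c) := by ring
    rw [expand]
    linarith [this.1]

/-- small ε keeping signs of the inactive hyperplanes -/
lemma eps_signs {A : Set (Hyperplane n)} (hA : A.Finite) (x w : Fin n → ℝ) :
    ∃ ε₀ > 0, ∀ ε : ℝ, 0 < ε → ε < ε₀ → ∀ H ∈ A, fval H x ≠ 0 →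
      0 < fval H (x + ε • w) * fval H x := by
  classical
  set F' := hA.toFinset.filter (fun H => fval H x ≠ 0) with hF'
  set f : Hyperplane n → ℝ :=
    fun H => (fval H x * fval H x) / (|dotp H.normal w * fval H x| + 1) with hf
  have hfpos : ∀ H ∈ F', 0 < f H := by
    intro H hH
    rw [hF', Finset.mem_filter] at hH
    have h3 : 0 < fval H x * fval H x := mul_self_pos.2 hH.2
    rw [hf]; positivity
  set ε₀ : ℝ := if h : F'.Nonempty then F'.inf' h f else 1 with hε₀
  have hε₀pos : 0 < ε₀ := by
    rw [hε₀]
    split_ifs with h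
    · rw [Finset.lt_inf'_iff]; intro H hH; exact hfpos H hH
    · norm_num
  refine ⟨ε₀, hε₀pos, ?_⟩
  intro ε hε1 hε2 H hHA hact
  rw [fval_add_smul, add_mul]
  have hHF : H ∈ F' := by
    rw [hF', Finset.mem_filter]; exact ⟨hA.mem_toFinset.2 hHA, hact⟩
  have hle : ε₀ ≤ f H := by
    rw [hε₀, dif_pos ⟨H, hHF⟩]
    exact Finset.inf'_le f hHF
  have hεf : ε < f H := lt_of_lt_of_le hε2 hle
  have habs : |dotp H.normal w * fval H x| + 1 > 0 := by positivity
  have h3 : ε * (|dotp H.normal w * fval H x| + 1) < fval H x * fval H x := by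
    rw [hf] at hεf
    calc ε * (|dotp H.normal w * fval H x| + 1)
        < (fval H x * fval H x / (|dotp H.normal w * fval H x| + 1))
          * (|dotp H.normal w * fval H x| + 1) :=
          mul_lt_mul_of_pos_right hεf habs
      _ = fval H x * fval H x := by field_simp
  have h4 : |ε * (dotp H.normal w * fval H x)| < fval H x * fval H x := by
    rw [abs_mul, abs_of_pos hε1]
    nlinarith [abs_nonneg (dotp H.normal w * fval H x)]
  have := abs_lt.1 h4
  have expand : ε * dotp H.normal w * fval H x = ε * (dotp H.normal w * fval H x) := by ring
  rw [expand]
  have h5 : 0 < fval H x * fval H x := mul_self_pos.2 hact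
  linarith [this.1]

lemma dotp_sum_left {ι : Type*} (s : Finset ι) (f : ι → (Fin n → ℝ)) (w : Fin n → ℝ) :
    dotp (∑ i ∈ s, f i) w = ∑ i ∈ s, dotp (f i) w := by
  classical
  induction s using Finset.induction_on with
  | empty => simp [dotp]
  | insert _ _ hx ih =>
    rw [Finset.sum_insert hx, Finset.sum_insert hx, dotp_add_left, ih]

/-- the active Finset at `x` -/
noncomputable def actF (hA : (A : Set (Hyperplane n)).Finite) (x : Fin n → ℝ) : Finset (Hyperplane n) :=
  hA.toFinset.filter (fun H => fval H x = 0)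

lemma mem_actF {A : Set (Hyperplane n)} {hA : A.Finite} {x : Fin n → ℝ} {H : Hyperplane n} :
    H ∈ actF hA x ↔ H ∈ A ∧ fval H x = 0 := by
  unfold actF
  rw [Finset.mem_filter, hA.mem_toFinset]

/-- KKT: the obstruction vector is a nonneg combination of active (inward) normals -/
lemma kkt {A : Set (Hyperplane n)} (hA : A.Finite) {p c x : Fin n → ℝ}
    (hc : c ∈ complSet A) (hx : x ∈ pcell A c)
    (hmin : ∀ y ∈ pcell A c, qd p x ≤ qd p y) :
    ∃ lam : Hyperplane n → ℝ, (∀ H ∈ actF hA x, 0 ≤ lam H) ∧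
      p - x = ∑ H ∈ actF hA x, lam H • ((-(fval H c)) • H.normal) := by
  classical
  apply farkas (actF hA x).card (actF hA x) le_rfl
  intro w hw
  have hw' : ∀ H ∈ A, fval H x = 0 → 0 ≤ dotp H.normal w * fval H c := by
    intro H hHA hHx
    have := hw H (mem_actF.2 ⟨hHA, hHx⟩)
    rw [dotp_smul_left] at this
    nlinarith
  obtain ⟨ε₀, hε₀, hadm⟩ := eps_admissible hA hc hx hw'
  exact foot_dir_le p hmin hε₀ hadm

/-- core of the ⊇ direction: separation by an active hyperplane -/
lemma sep_exists {A : Set (Hyperplane n)} (hA : A.Finite) {p c x c' x' : Fin n → ℝ}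
    (hc : c ∈ complSet A) (hx : x ∈ pcell A c)
    (hmin : ∀ y ∈ pcell A c, qd p x ≤ qd p y)
    (hc' : c' ∈ complSet A) (hx' : x' ∈ pcell A c')
    (hne : cell A c ≠ cell A c') (hle : qd p x' ≤ qd p x) :
    ∃ H ∈ A, fval H x = 0 ∧ fval H c * fval H c' < 0 := by
  classical
  by_contra hno
  push_neg at hno
  -- for active H, signs of c and c' agree
  have hagree : ∀ H ∈ A, fval H x = 0 → 0 < fval H c * fval H c' := by
    intro H hHA hHx
    have h1 := hno H hHA hHx
    exact lt_of_le_of_ne h1 (Ne.symm (mul_ne_zero (hc H hHA) (hc' H hHA)))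
  obtain ⟨lam, hlam0, hlam⟩ := kkt hA hc hx hmin
  have hdot : dotp (p - x) (x' - x) ≤ 0 := by
    rw [hlam, dotp_sum_left]
    apply Finset.sum_nonpos
    intro H hH
    obtain ⟨hHA, hHx⟩ := mem_actF.1 hH
    rw [dotp_smul_left, dotp_smul_left, ← fval_sub_eq, hHx, sub_zero]
    have h1 : 0 ≤ fval H x' * fval H c' := hx' H hHA
    have h2 : 0 < fval H c * fval H c' := hagree H hHA hHx
    have h3 : fval H c' ≠ 0 := hc' H hHA
    have h4 : 0 ≤ fval H c * fval H x' := by nlinarith [mul_self_pos.2 h3]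
    have h5 := hlam0 H hH
    nlinarith
  have hexp := qd_expand p x x'
  have hz : dotp (x' - x) (x' - x) ≤ 0 := by linarith
  have hxx' : x' = x := by
    have := dotp_self_eq_zero (le_antisymm hz (dotp_self_nonneg _))
    have h := sub_eq_zero.1 this
    exact h
  obtain ⟨H₀, hH₀A, hH₀⟩ : ∃ H₀ ∈ A, fval H₀ c * fval H₀ c' < 0 := by
    by_contra hno2
    push_neg at hno2
    apply hne
    have hc'c : c' ∈ cell A c := by
      intro H hHA
      have h1 := hno2 H hHA
      have h2 : fval H c * fval H c' ≠ 0 := mul_ne_zero (hc H hHA) (hc' H hHA)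
      have h3 : 0 < fval H c * fval H c' := lt_of_le_of_ne h1 (Ne.symm h2)
      nlinarith
    exact (cell_eq_of_mem hc'c).symm
  have hH₀x : fval H₀ x ≠ 0 := by
    intro h0
    exact absurd hH₀ (not_lt.2 (hno H₀ hH₀A h0))
  have h1 : 0 ≤ fval H₀ x * fval H₀ c := hx H₀ hH₀A
  have h2 : 0 ≤ fval H₀ x * fval H₀ c' := by
    have := hx' H₀ hH₀A
    rw [hxx'] at this
    exact this
  nlinarith [mul_self_pos.2 hH₀x]

/-- core of the ⊆ direction -/
lemma subset_core {A : Set (Hyperplane n)} (hA : A.Finite) {p c x z : Fin n → ℝ}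
    (hc : c ∈ complSet A)
    (hx : x ∈ pcell A c) (hmin : ∀ y ∈ pcell A c, qd p x ≤ qd p y)
    (hgen : ∀ T : Finset (Hyperplane n), ↑T ⊆ A → ∀ Hs ∈ A, ∀ x' z' : Fin n → ℝ,
        (∀ H ∈ T, fval H x' = 0) → fval Hs x' = 0 →
        (∀ H ∈ T, fval H z' = 0) → fval Hs z' ≠ 0 → p - x' ∉ SpanT T)
    (hclose : ∀ y₀, y₀ ∈ complSet A → qd p y₀ < qd p x →
        ∃ H ∈ A, fval H c * fval H y₀ < 0 ∧ fval H z = 0) :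
    ∀ Hs ∈ A, fval Hs x = 0 → fval Hs z = 0 := by
  classical
  intro Hs hHsA hHsx
  by_contra hHsz
  set v := p - x with hv
  set Nz : Finset (Hyperplane n) :=
    hA.toFinset.filter (fun H => fval H x = 0 ∧ fval H z = 0) with hNz
  have memNz : ∀ {H}, H ∈ Nz ↔ H ∈ A ∧ fval H x = 0 ∧ fval H z = 0 := by
    intro H; rw [hNz, Finset.mem_filter, hA.mem_toFinset]
  set u := c - x with hu
  have hdu : ∀ H : Hyperplane n, dotp H.normal u = fval H c - fval H x := by
    intro H; rw [hu, ← fval_sub_eq]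
  by_cases hex : ∃ w, 0 < dotp v w ∧ ∀ H ∈ Nz, 0 < dotp H.normal w * fval H c
  · obtain ⟨w, hw1, hw2⟩ := hex
    set dvu := dotp v u with hdvu
    set δ₁ := dotp v w / (|dvu| + 1) with hδ₁
    have hδ₁pos : 0 < δ₁ := by rw [hδ₁]; positivity
    set bad : Finset ℝ := (hA.toFinset.filter (fun H => fval H x = 0)).image
      (fun H => -(dotp H.normal w) / dotp H.normal u) with hbad
    have hIoo : (Set.Ioo (0:ℝ) δ₁).Infinite := Set.Ioo_infinite hδ₁pos
    obtain ⟨δ, hδ⟩ := (hIoo.diff bad.finite_toSet).nonempty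
    obtain ⟨⟨hδ0, hδlt⟩, hδbad⟩ := hδ
    set w' := w + δ • u with hw'
    have hdw' : ∀ H : Hyperplane n, dotp H.normal w'
        = dotp H.normal w + δ * dotp H.normal u := by
      intro H; rw [hw', dotp_add_right, dotp_smul_right]
    have hd1 : δ * (|dvu| + 1) < dotp v w := by
      rw [hδ₁] at hδlt
      exact (lt_div_iff₀ (by positivity)).1 hδlt
    have hP1 : 0 < dotp v w' := by
      rw [hw', dotp_add_right, dotp_smul_right, ← hdvu]
      nlinarith [le_abs_self dvu, neg_abs_le dvu, abs_nonneg dvu]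
    have hP2 : ∀ H ∈ Nz, 0 < dotp H.normal w' * fval H c := by
      intro H hH
      obtain ⟨hHA, hHx, hHz⟩ := memNz.1 hH
      have hcn : fval H c ≠ 0 := hc H hHA
      rw [hdw', hdu H, hHx, sub_zero, add_mul]
      have := hw2 H hH
      nlinarith [mul_self_pos.2 hcn]
    have hP3 : ∀ H ∈ A, fval H x = 0 → dotp H.normal w' ≠ 0 := by
      intro H hHA hHx h0
      rw [hdw'] at h0
      have hnu : dotp H.normal u ≠ 0 := by
        rw [hdu H, hHx, sub_zero]; exact hc H hHA
      apply hδbad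
      rw [Finset.mem_coe, hbad, Finset.mem_image]
      refine ⟨H, ?_, ?_⟩
      · rw [Finset.mem_filter]; exact ⟨hA.mem_toFinset.2 hHA, hHx⟩
      · field_simp
        linarith
    obtain ⟨ε₁, hε₁pos, hsig⟩ := eps_signs hA x w'
    set ε₂ := 2 * dotp v w' / (dotp w' w' + 1) with hε₂
    have hww'0 : 0 ≤ dotp w' w' := dotp_self_nonneg w'
    have hε₂pos : 0 < ε₂ := by rw [hε₂]; positivity
    set ε := min ε₁ ε₂ / 2 with hε
    have hεpos : 0 < ε := by rw [hε]; positivity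
    have hhalf : min ε₁ ε₂ / 2 < min ε₁ ε₂ := half_lt_self (lt_min hε₁pos hε₂pos)
    have hεlt₁ : ε < ε₁ := by
      rw [hε]; linarith [min_le_left ε₁ ε₂]
    have hεlt₂ : ε < ε₂ := by
      rw [hε]; linarith [min_le_right ε₁ ε₂]
    set y₀ := x + ε • w' with hy₀
    have hfy₀ : ∀ H : Hyperplane n, fval H y₀ = fval H x + ε * dotp H.normal w' := by
      intro H; rw [hy₀, fval_add_smul]
    have hy₀q : qd p y₀ < qd p x := by
      have hexp := qd_expand p x y₀
      have hyx : y₀ - x = ε • w' := by rw [hy₀]; abel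
      rw [hyx, dotp_smul_right, dotp_smul_left, dotp_smul_right, ← hv] at hexp
      have hb : ε * (dotp w' w' + 1) < 2 * dotp v w' := by
        rw [hε₂] at hεlt₂
        exact (lt_div_iff₀ (by positivity)).1 hεlt₂
      nlinarith
    have hy₀c : y₀ ∈ complSet A := by
      intro H hHA hcar
      rw [mem_carrier_iff] at hcar
      by_cases hHx : fval H x = 0
      · rw [hfy₀, hHx, zero_add] at hcar
        exact hP3 H hHA hHx (by
          rcases mul_eq_zero.1 hcar with h | h
          · exact absurd h (ne_of_gt hεpos)
          · exact h)
      · have := hsig ε hεpos hεlt₁ H hHA hHx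
        rw [hcar, zero_mul] at this
        exact lt_irrefl 0 this
    obtain ⟨H, hHA, hprod, hHz⟩ := hclose y₀ hy₀c hy₀q
    by_cases hHx : fval H x = 0
    · have hHNz : H ∈ Nz := memNz.2 ⟨hHA, hHx, hHz⟩
      have h2 := hP2 H hHNz
      rw [hfy₀, hHx, zero_add] at hprod
      nlinarith
    · have h1 := hsig ε hεpos hεlt₁ H hHA hHx
      have h2 : 0 ≤ fval H x * fval H c := hx H hHA
      have h3 : 0 < fval H x * fval H c :=
        lt_of_le_of_ne h2 (Ne.symm (mul_ne_zero hHx (hc H hHA)))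
      nlinarith [mul_self_pos.2 hHx]
  · push_neg at hex
    have hyp : ∀ w, (∀ H ∈ Nz, dotp ((-(fval H c)) • H.normal) w ≤ 0) → dotp v w ≤ 0 := by
      intro w hw
      by_contra hpos
      rw [not_le] at hpos
      set dvu := dotp v u with hdvu
      set δ := dotp v w / (2 * (|dvu| + 1)) with hδ
      have hδpos : 0 < δ := by rw [hδ]; positivity
      set w'' := w + δ • u with hw''
      have h1 : 0 < dotp v w'' := by
        rw [hw'', dotp_add_right, dotp_smul_right, ← hdvu]
        have h2 : δ * (|dvu| + 1) = dotp v w / 2 := by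
          rw [hδ]; field_simp
        nlinarith [le_abs_self dvu, neg_abs_le dvu, abs_nonneg dvu]
      obtain ⟨H, hH, hle⟩ := hex w'' h1
      obtain ⟨hHA, hHx, hHz⟩ := memNz.1 hH
      have hcn : fval H c ≠ 0 := hc H hHA
      have h3 := hw H hH
      rw [dotp_smul_left] at h3
      have h4 : 0 ≤ fval H c * dotp H.normal w := by nlinarith
      have h5 : dotp H.normal w'' * fval H c
          = dotp H.normal w * fval H c + δ * (fval H c * fval H c) := by
        rw [hw'', dotp_add_right, dotp_smul_right, hdu H, hHx, sub_zero]
        ring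
      rw [h5] at hle
      nlinarith [mul_self_pos.2 hcn]
    obtain ⟨lam, hlam0, hlam⟩ := farkas Nz.card Nz le_rfl
      (fun H => (-(fval H c)) • H.normal) v hyp
    have hvspan : v ∈ SpanT Nz := by
      rw [hlam]
      apply Submodule.sum_mem
      intro H hH
      rw [smul_smul]
      exact Submodule.smul_mem _ _ (Submodule.subset_span ⟨H, hH, rfl⟩)
    exact hgen Nz (fun H hH => (memNz.1 hH).1) Hs hHsA x z
      (fun H hH => (memNz.1 hH).2.1) hHsx
      (fun H hH => (memNz.1 hH).2.2) hHsz hvspan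

end ValidOrder

open ValidOrder in
/-- **Delucchi, Lofano–Paolini.** Every finite real hyperplane arrangement
admits a valid order: if `A` has `t` chambers, there is an enumeration `i ↦ Cᵢ` of the
chambers (a bijection `Fin t ≃ Ch(A)`) such that for every `i`, the set
`⋂_{j < i} ⋃_{H ∈ Sep(Cᵢ, Cⱼ)} H` is a nonempty affine subspace of `ℝ^n`
(for the least `i` the empty intersection is all of `ℝ^n`). -/
theorem exists_valid_order (n : ℕ) (hn : 1 ≤ n) (A : Set (Hyperplane n)) (hA : A.Finite)
    (t : ℕ) (e₀ : Fin t ≃ Chambers n A) :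
    ∃ e : Fin t ≃ Chambers n A, ∀ i : Fin t,
      ∃ S : AffineSubspace ℝ (Fin n → ℝ), (S : Set (Fin n → ℝ)).Nonempty ∧
        (⋂ j : Fin t, ⋂ (_ : j < i), ⋃ H ∈ SepSet A (e i).1 (e j).1, H.carrier)
          = (S : Set (Fin n → ℝ)) := by
  classical
  obtain ⟨p, hpc, hgen⟩ := exists_generic hn A hA
  have hbase : ∀ C : Chambers n A, ∃ c, c ∈ complSet A ∧ C.1 = cell A c := by
    intro C
    obtain ⟨c, hc, hcell⟩ := (isChamber_iff hA).1 C.2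
    exact ⟨c, hc, hcell⟩
  choose bp hbp1 hbp2 using hbase
  have hfoot : ∀ C : Chambers n A, ∃ x, x ∈ pcell A (bp C) ∧
      ∀ y ∈ pcell A (bp C), qd p x ≤ qd p y := by
    intro C
    obtain ⟨x, h1, h2⟩ := exists_foot p (isClosed_pcell (bp C))
      (cell_subset_pcell (mem_cell_self (hbp1 C)))
    exact ⟨x, h1, h2⟩
  choose ft hft1 hft2 using hfoot
  set d : Chambers n A → ℝ := fun C => qd p (ft C) with hd
  set dd : Fin t → ℝ := fun k => d (e₀ k) with hdd
  set π := Tuple.sort dd with hπ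
  set e : Fin t ≃ Chambers n A := π.trans e₀ with he
  have hmono : Monotone (dd ∘ π) := Tuple.monotone_sort dd
  have hsorted : ∀ j i : Fin t, j ≤ i → d (e j) ≤ d (e i) := by
    intro j i hji
    have := hmono hji
    simpa [he, hdd] using this
  refine ⟨e, fun i => ?_⟩
  set C := e i with hC
  set c := bp C with hcdef
  set x := ft C with hxdef
  have hc : c ∈ complSet A := hbp1 C
  have hx : x ∈ pcell A c := hft1 C
  have hmin : ∀ y ∈ pcell A c, qd p x ≤ qd p y := hft2 C
  set Lset : Set (Fin n → ℝ) := {y | ∀ H ∈ A, fval H x = 0 → fval H y = 0} with hLset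
  have hsvv : ∀ (r : ℝ) {p1 p2 p3 : Fin n → ℝ}, p1 ∈ Lset → p2 ∈ Lset → p3 ∈ Lset →
      r • (p1 -ᵥ p2) +ᵥ p3 ∈ Lset := by
    intro r p1 p2 p3 h1 h2 h3 H hHA hHx
    have hv : r • (p1 -ᵥ p2) +ᵥ p3 = p3 + r • (p1 - p2) := by
      rw [vsub_eq_sub, vadd_eq_add]; abel
    rw [hv, fval_add_smul, ← fval_sub_eq, h1 H hHA hHx, h2 H hHA hHx, h3 H hHA hHx]
    ring
  refine ⟨{ carrier := Lset, smul_vsub_vadd_mem' := hsvv }, ⟨x, fun H _ hHx => hHx⟩, ?_⟩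
  have hcoe : ((({ carrier := Lset, smul_vsub_vadd_mem' := hsvv } :
      AffineSubspace ℝ (Fin n → ℝ))) : Set (Fin n → ℝ)) = Lset := rfl
  rw [hcoe]
  ext z
  simp only [mem_iInter]
  constructor
  · -- ⊆ direction
    intro hz
    have hclose : ∀ y₀, y₀ ∈ complSet A → qd p y₀ < qd p x →
        ∃ H ∈ A, fval H c * fval H y₀ < 0 ∧ fval H z = 0 := by
      intro y₀ hy₀c hy₀q
      set D : Chambers n A := ⟨cell A y₀, (isChamber_iff hA).2 ⟨y₀, hy₀c, rfl⟩⟩ with hD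
      have hy₀mem : y₀ ∈ pcell A (bp D) := by
        have h1 : (D : Chambers n A).1 = cell A (bp D) := hbp2 D
        have h2 : cell A y₀ = cell A (bp D) := h1
        exact cell_subset_pcell (h2 ▸ mem_cell_self hy₀c)
      have hdD : d D < d C := by
        have h1 : d D ≤ qd p y₀ := hft2 D y₀ hy₀mem
        exact lt_of_le_of_lt h1 hy₀q
      set j := e.symm D with hj
      have hej : e j = D := e.apply_symm_apply D
      have hji : j < i := by
        by_contra hni
        rw [not_lt] at hni
        have := hsorted i j hni
        rw [hej] at this
        rw [hC] at hdD
        exact absurd hdD (not_lt.2 this)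
      have hzj2 := hz j hji
      rw [hej] at hzj2
      simp only [mem_iUnion] at hzj2
      obtain ⟨H, hHSep, hzcar⟩ := hzj2
      obtain ⟨hHA, hHsep⟩ := hHSep
      have hsep2 : fval H (bp C) * fval H y₀ < 0 := by
        rw [hbp2 C] at hHsep
        exact (separates_iff (hbp1 C) hy₀c hHA).1 hHsep
      exact ⟨H, hHA, hsep2, mem_carrier_iff.1 hzcar⟩
    exact subset_core hA hc hx hmin hgen hclose
  · -- ⊇ direction
    intro hz j hji
    set C' := e j with hC'
    have hCne : C' ≠ C := by
      intro h
      have := e.injective h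
      exact absurd this (ne_of_lt hji)
    have hcellne : cell A c ≠ cell A (bp C') := by
      rw [← hbp2 C, ← hbp2 C']
      intro h
      exact hCne (Subtype.ext h.symm)
    have hle : qd p (ft C') ≤ qd p x := hsorted j i (le_of_lt hji)
    obtain ⟨H, hHA, hHx, hHsep⟩ := sep_exists hA hc hx hmin (hbp1 C') (hft1 C')
      hcellne hle
    simp only [mem_iUnion]
    refine ⟨H, ⟨hHA, ?_⟩, mem_carrier_iff.2 (hz H hHA hHx)⟩
    rw [hbp2 C, hbp2 C']
    exact (separates_iff (hbp1 C) (hbp1 C') hHA).2 hHsep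
end

section
/- Let A be a finite set of affine hyperplanes in ℝ^n and let C be a chamber of A. Then the projection U_C → ℂ^n, (x,z) ↦ x, is a trivial fiber bundle with fiber ℝ^n: it is surjective and there is a homeomorphism U_C → ℂ^n × ℝ^n commuting with the projections to ℂ^n. -/
open Set

/-- `p : E → B` is a fiber bundle with fiber `F`: a continuous surjection which is locally
on the base homeomorphic, over the base, to a product with `F`. -/
def IsFiberBundleWith {E B : Type*} [TopologicalSpace E] [TopologicalSpace B]
    (F : Type*) [TopologicalSpace F] (p : E → B) : Prop :=
  Continuous p ∧ Function.Surjective p ∧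
    ∀ b : B, ∃ V : Set B, b ∈ V ∧ IsOpen V ∧
      ∃ φ : (p ⁻¹' V) ≃ₜ V × F, ∀ e : p ⁻¹' V, ((φ e).1 : B) = p e

/-- The open set `U_C ⊆ ℂ^n × ℝ^n` attached to a chamber `C`: pairs `(x, z)` such that for
every `H ∈ A` with `x ∈ H_ℂ`, the point `z` lies on the `C`-side of `H`. -/
def UC {n : ℕ} (A : Set (Hyperplane n)) (C : Set (Fin n → ℝ)) :
    Set ((Fin n → ℂ) × (Fin n → ℝ)) :=
  {p | ∀ H ∈ A, p.1 ∈ H.carrierC → SameSide H C p.2}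

/-- The complement `M(A_{(3)})` of the induced codimension-3 subspace arrangement in
`ℂ^n × ℝ^n = (ℝ^3)^n`. -/
def M3 {n : ℕ} (A : Set (Hyperplane n)) : Set ((Fin n → ℂ) × (Fin n → ℝ)) :=
  {p | ∀ H ∈ A, ¬(p.1 ∈ H.carrierC ∧ p.2 ∈ H.carrier)}

/-- The gluing relation defining `X_A(ℂ)`: the point `x` in the copy of `ℂ^n` indexed by the
chamber `C` is identified with the point `x` in the copy indexed by `D` whenever
`x ∉ H_ℂ` for all `H ∈ Sep(C,D)`. -/
def XACRel {n : ℕ} (A : Set (Hyperplane n)) :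
    (Σ _ : Chambers n A, Fin n → ℂ) → (Σ _ : Chambers n A, Fin n → ℂ) → Prop :=
  fun p q => p.2 = q.2 ∧ ∀ H ∈ SepSet A p.1.1 q.1.1, p.2 ∉ H.carrierC

/-- The complex points `X_A(ℂ)`, as a topological space: the quotient of the disjoint union
`∐_{C ∈ Ch(A)} ℂ^n` by the equivalence relation generated by `XACRel`. -/
abbrev XAC (n : ℕ) (A : Set (Hyperplane n)) : Type := Quot (XACRel A)

namespace UCAux

noncomputable section

variable {n : ℕ}

def L (H : Hyperplane n) (z : Fin n → ℝ) : ℝ := ∑ i, H.normal i * z i + H.const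

def LC (H : Hyperplane n) (x : Fin n → ℂ) : ℂ := ∑ i, (H.normal i : ℂ) * x i + (H.const : ℂ)

def sfun (t u : ℝ) : ℝ := (u + Real.sqrt (u ^ 2 + t ^ 2)) / 2

def Pfun (t u : ℝ) : ℝ := max 0 (-Real.log (sfun t u))

lemma L_affine (H : Hyperplane n) (c w : Fin n → ℝ) (l : ℝ) :
    L H (c + l • (w - c)) = L H c + l * (L H w - L H c) := by
  have key : ∀ i, H.normal i * (c i + l * (w i - c i)) =
      H.normal i * c i + (l * (H.normal i * w i) - l * (H.normal i * c i)) := fun i => by ring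
  simp only [L, Pi.add_apply, Pi.smul_apply, Pi.sub_apply, smul_eq_mul]
  rw [Finset.sum_congr rfl fun i _ => key i, Finset.sum_add_distrib, Finset.sum_sub_distrib,
    ← Finset.mul_sum, ← Finset.mul_sum]
  ring

lemma sfun_pos {t u : ℝ} (h : t ≠ 0 ∨ 0 < u) : 0 < sfun t u := by
  have hs : 0 ≤ Real.sqrt (u ^ 2 + t ^ 2) := Real.sqrt_nonneg _
  have hs2 : Real.sqrt (u ^ 2 + t ^ 2) ^ 2 = u ^ 2 + t ^ 2 :=
    Real.sq_sqrt (by positivity)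
  rcases h with h | h
  · have ht : 0 < t ^ 2 := by positivity
    unfold sfun
    nlinarith [hs, hs2]
  · unfold sfun
    nlinarith [hs]

lemma sfun_zero_of_pos {u : ℝ} (h : 0 < u) : sfun 0 u = u := by
  unfold sfun
  rw [show u ^ 2 + 0 ^ 2 = u ^ 2 by ring, Real.sqrt_sq h.le]
  ring

lemma sfun_zero_of_nonpos {u : ℝ} (h : u ≤ 0) : sfun 0 u = 0 := by
  unfold sfun
  rw [show u ^ 2 + 0 ^ 2 = (-u) ^ 2 by ring, Real.sqrt_sq (by linarith)]
  ring

lemma sfun_mono {t u u' : ℝ} (h : u ≤ u') : sfun t u ≤ sfun t u' := by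
  have ha : 0 ≤ Real.sqrt (u ^ 2 + t ^ 2) := Real.sqrt_nonneg _
  have hb : 0 ≤ Real.sqrt (u' ^ 2 + t ^ 2) := Real.sqrt_nonneg _
  have ha2 : Real.sqrt (u ^ 2 + t ^ 2) ^ 2 = u ^ 2 + t ^ 2 := Real.sq_sqrt (by positivity)
  have hb2 : Real.sqrt (u' ^ 2 + t ^ 2) ^ 2 = u' ^ 2 + t ^ 2 := Real.sq_sqrt (by positivity)
  have hau : -u ≤ Real.sqrt (u ^ 2 + t ^ 2) := by nlinarith
  have hbu : -u' ≤ Real.sqrt (u' ^ 2 + t ^ 2) := by nlinarith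
  unfold sfun
  nlinarith [mul_nonneg (add_nonneg ha hb) (sub_nonneg.2 h)]

lemma sfun_continuous : Continuous fun p : ℝ × ℝ => sfun p.1 p.2 := by
  unfold sfun; fun_prop

lemma Pfun_nonneg (t u : ℝ) : 0 ≤ Pfun t u := le_max_left _ _

lemma Pfun_anti {t u u' : ℝ} (hs : 0 < sfun t u) (h : u ≤ u') : Pfun t u' ≤ Pfun t u := by
  have := sfun_mono (t := t) h
  exact max_le_max le_rfl (neg_le_neg (Real.log_le_log hs this))

lemma Pfun_continuousAt {t u : ℝ} (hs : 0 < sfun t u) :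
    ContinuousAt (fun p : ℝ × ℝ => Pfun p.1 p.2) (t, u) := by
  have h1 : ContinuousAt (fun p : ℝ × ℝ => sfun p.1 p.2) (t, u) := sfun_continuous.continuousAt
  have h2 : ContinuousAt Real.log (sfun t u) := Real.continuousAt_log hs.ne'
  have h3 : ContinuousAt (fun p : ℝ × ℝ => Real.log (sfun p.1 p.2)) (t, u) :=
    ContinuousAt.comp (g := Real.log) (f := fun p : ℝ × ℝ => sfun p.1 p.2) h2 h1
  unfold Pfun
  exact continuousAt_const.max h3.neg

lemma Pfun_zero_ge {u a : ℝ} (hu : 0 < u) (hle : u ≤ Real.exp (-a)) : a ≤ Pfun 0 u := by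
  rw [Pfun, sfun_zero_of_pos hu]
  have : Real.log u ≤ -a := by
    calc Real.log u ≤ Real.log (Real.exp (-a)) := Real.log_le_log hu hle
    _ = -a := Real.log_exp _
  exact le_max_of_le_right (by linarith)

def dL (H : Hyperplane n) (v : Fin n → ℝ) : ℝ := ∑ i, H.normal i * v i

lemma L_ray (H : Hyperplane n) (c v : Fin n → ℝ) (l : ℝ) :
    L H (c + l • v) = L H c + l * dL H v := by
  have key : ∀ i, H.normal i * (c i + l * v i) =
      H.normal i * c i + l * (H.normal i * v i) := fun i => by ring
  simp only [L, dL, Pi.add_apply, Pi.smul_apply, smul_eq_mul]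
  rw [Finset.sum_congr rfl fun i _ => key i, Finset.sum_add_distrib, ← Finset.mul_sum]
  ring

def mfun (𝔽 : Finset (Hyperplane n)) (c : Fin n → ℝ) (x : Fin n → ℂ) (z : Fin n → ℝ) : ℝ :=
  1 + ∑ H ∈ 𝔽, Pfun ‖LC H x‖ (min (L H c * L H c) (L H c * L H z))

def U' (𝔽 : Finset (Hyperplane n)) (c : Fin n → ℝ) : Set ((Fin n → ℂ) × (Fin n → ℝ)) :=
  {p | ∀ H ∈ 𝔽, LC H p.1 = 0 → 0 < L H c * L H p.2}

variable {𝔽 : Finset (Hyperplane n)} {c : Fin n → ℝ}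

lemma L_continuous (H : Hyperplane n) : Continuous (L H) :=
  (continuous_finset_sum _ fun i _ => continuous_const.mul (continuous_apply i)).add
    continuous_const

lemma LC_continuous (H : Hyperplane n) : Continuous (LC H) :=
  (continuous_finset_sum _ fun i _ => continuous_const.mul (continuous_apply i)).add
    continuous_const

lemma sfun_arg_pos (hc : ∀ H ∈ 𝔽, L H c ≠ 0) {p : (Fin n → ℂ) × (Fin n → ℝ)}
    (hp : p ∈ U' 𝔽 c) {H : Hyperplane n} (hH : H ∈ 𝔽) :
    0 < sfun ‖LC H p.1‖ (min (L H c * L H c) (L H c * L H p.2)) := by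
  by_cases h0 : LC H p.1 = 0
  · refine sfun_pos (Or.inr (lt_min ?_ (hp H hH h0)))
    exact mul_self_pos.2 (hc H hH)
  · exact sfun_pos (Or.inl (by simpa using h0))

lemma one_le_mfun (x : Fin n → ℂ) (z : Fin n → ℝ) : 1 ≤ mfun 𝔽 c x z :=
  le_add_of_nonneg_right (Finset.sum_nonneg fun H _ => Pfun_nonneg _ _)

lemma mfun_pos (x : Fin n → ℂ) (z : Fin n → ℝ) : 0 < mfun 𝔽 c x z :=
  lt_of_lt_of_le one_pos (one_le_mfun x z)

lemma mfun_continuousAt (hc : ∀ H ∈ 𝔽, L H c ≠ 0) {p : (Fin n → ℂ) × (Fin n → ℝ)}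
    (hp : p ∈ U' 𝔽 c) :
    ContinuousAt (fun q : (Fin n → ℂ) × (Fin n → ℝ) => mfun 𝔽 c q.1 q.2) p := by
  unfold mfun
  refine continuousAt_const.add (tendsto_finset_sum _ fun H hH => ?_)
  have hinner : Continuous fun q : (Fin n → ℂ) × (Fin n → ℝ) =>
      ((‖LC H q.1‖, min (L H c * L H c) (L H c * L H q.2)) : ℝ × ℝ) :=
    (((LC_continuous H).comp continuous_fst).norm).prodMk
      (continuous_const.min (continuous_const.mul ((L_continuous H).comp continuous_snd)))
  exact ContinuousAt.comp
    (f := fun q : (Fin n → ℂ) × (Fin n → ℝ) =>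
      ((‖LC H q.1‖, min (L H c * L H c) (L H c * L H q.2)) : ℝ × ℝ))
    (Pfun_continuousAt (sfun_arg_pos hc hp hH)) hinner.continuousAt

lemma g_mono (hc : ∀ H ∈ 𝔽, L H c ≠ 0) (x : Fin n → ℂ) (v : Fin n → ℝ) {l l' : ℝ}
    (hl : 0 ≤ l) (hll : l < l') (hmem : (x, c + l' • v) ∈ U' 𝔽 c) :
    l * mfun 𝔽 c x (c + l • v) < l' * mfun 𝔽 c x (c + l' • v) := by
  have hM : mfun 𝔽 c x (c + l • v) ≤ mfun 𝔽 c x (c + l' • v) := by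
    unfold mfun
    refine add_le_add le_rfl (Finset.sum_le_sum fun H hH => ?_)
    have harg : min (L H c * L H c) (L H c * L H (c + l' • v)) ≤
        min (L H c * L H c) (L H c * L H (c + l • v)) := by
      rw [L_ray, L_ray]
      rcases le_or_gt (L H c * dL H v) 0 with he | he
      · refine min_le_min le_rfl ?_
        nlinarith
      · have h1 : L H c * (L H c + l * dL H v) = L H c * L H c + l * (L H c * dL H v) := by ring
        have h2 : L H c * (L H c + l' * dL H v) = L H c * L H c + l' * (L H c * dL H v) := by
          ring
        rw [h1, h2, min_eq_left (by nlinarith), min_eq_left (by nlinarith)]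
    exact Pfun_anti (sfun_arg_pos hc hmem hH) harg
  calc l * mfun 𝔽 c x (c + l • v) ≤ l * mfun 𝔽 c x (c + l' • v) :=
        mul_le_mul_of_nonneg_left hM hl
    _ < l' * mfun 𝔽 c x (c + l' • v) := mul_lt_mul_of_pos_right hll (mfun_pos _ _)

def Psi (𝔽 : Finset (Hyperplane n)) (c : Fin n → ℝ) (p : (Fin n → ℂ) × (Fin n → ℝ)) :
    (Fin n → ℂ) × (Fin n → ℝ) :=
  (p.1, c + mfun 𝔽 c p.1 p.2 • (p.2 - c))

lemma Psi_fst (p : (Fin n → ℂ) × (Fin n → ℝ)) : (Psi 𝔽 c p).1 = p.1 := rfl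

lemma Psi_continuousOn (hc : ∀ H ∈ 𝔽, L H c ≠ 0) :
    ContinuousOn (Psi 𝔽 c) (U' 𝔽 c) := by
  intro p hp
  apply ContinuousAt.continuousWithinAt
  exact continuousAt_fst.prodMk (continuousAt_const.add
    ((mfun_continuousAt hc hp).smul (continuousAt_snd.sub continuousAt_const)))

lemma Psi_inj (hc : ∀ H ∈ 𝔽, L H c ≠ 0) :
    ∀ p ∈ U' 𝔽 c, ∀ p' ∈ U' 𝔽 c, Psi 𝔽 c p = Psi 𝔽 c p' → p = p' := by
  rintro ⟨x, z⟩ hp ⟨x', z'⟩ hp' heq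
  have hx : x = x' := congrArg Prod.fst heq
  subst hx
  have h2 : mfun 𝔽 c x z • (z - c) = mfun 𝔽 c x z' • (z' - c) := by
    have := congrArg Prod.snd heq
    simpa [Psi] using this
  have ha := mfun_pos (𝔽 := 𝔽) (c := c) x z
  have ha' := mfun_pos (𝔽 := 𝔽) (c := c) x z'
  by_cases hz : z = c
  · have h0 : mfun 𝔽 c x z' • (z' - c) = 0 := by rw [← h2, hz]; simp
    rcases smul_eq_zero.1 h0 with h | h
    · exact absurd h ha'.ne'
    · have hz' : z' = c := by rwa [sub_eq_zero] at h
      rw [Prod.mk.injEq]; exact ⟨rfl, by rw [hz, hz']⟩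
  · by_cases hz' : z' = c
    · have h0 : mfun 𝔽 c x z • (z - c) = 0 := by rw [h2, hz']; simp
      rcases smul_eq_zero.1 h0 with h | h
      · exact absurd h ha.ne'
      · exact absurd (sub_eq_zero.1 h) hz
    · -- both differ from c
      set v := z' - c with hv
      set κ := mfun 𝔽 c x z' / mfun 𝔽 c x z with hκ
      have hκpos : 0 < κ := div_pos ha' ha
      have hzv : z = c + κ • v := by
        have : z - c = κ • v := by
          rw [hκ, div_eq_inv_mul, ← smul_smul]
          rw [← h2, smul_smul, inv_mul_cancel₀ ha.ne', one_smul]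
        rw [← this]; abel
      have hz'v : z' = c + (1 : ℝ) • v := by simp [hv]
      have hgκ : κ * mfun 𝔽 c x (c + κ • v) = 1 * mfun 𝔽 c x (c + (1 : ℝ) • v) := by
        rw [← hzv, ← hz'v, hκ, one_mul, div_mul_cancel₀ _ ha.ne']
      have hmemκ : (x, c + κ • v) ∈ U' 𝔽 c := by rw [← hzv]; exact hp
      have hmem1 : (x, c + (1 : ℝ) • v) ∈ U' 𝔽 c := by rw [← hz'v]; exact hp'
      have hκ1 : κ = 1 := by
        rcases lt_trichotomy κ 1 with h | h | h
        · exact absurd hgκ (g_mono hc x v hκpos.le h hmem1).ne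
        · exact h
        · exact absurd hgκ.symm (g_mono hc x v zero_le_one h hmemκ).ne
      have : z = z' := by rw [hzv, hz'v, hκ1]
      simp [this]

lemma Psi_surj (hc : ∀ H ∈ 𝔽, L H c ≠ 0) (x : Fin n → ℂ) (w : Fin n → ℝ) :
    ∃ z, (x, z) ∈ U' 𝔽 c ∧ Psi 𝔽 c (x, z) = (x, w) := by
  classical
  set v := w - c with hv
  -- reduce goal to finding l with ray membership and l * mfun = 1
  suffices h : ∃ l : ℝ, (x, c + l • v) ∈ U' 𝔽 c ∧
      l * mfun 𝔽 c x (c + l • v) = 1 by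
    obtain ⟨l, hmem, hl⟩ := h
    refine ⟨c + l • v, hmem, ?_⟩
    have : mfun 𝔽 c x (c + l • v) • ((c + l • v) - c) = v := by
      have h1 : (c + l • v) - c = l • v := by abel
      rw [h1, smul_smul, mul_comm, hl, one_smul]
    simp only [Psi]
    rw [this]
    simp [hv]
  -- the set of "active" hyperplanes
  set I := 𝔽.filter (fun H => LC H x = 0) with hI
  have memray : ∀ l : ℝ, (∀ H ∈ I, 0 < L H c * L H (c + l • v)) → (x, c + l • v) ∈ U' 𝔽 c := by
    intro l h H hH h0
    exact h H (Finset.mem_filter.2 ⟨hH, h0⟩)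
  have gcont : ∀ b : ℝ, (∀ l ∈ Icc (0:ℝ) b, (x, c + l • v) ∈ U' 𝔽 c) →
      ContinuousOn (fun l : ℝ => l * mfun 𝔽 c x (c + l • v)) (Icc 0 b) := by
    intro b hb
    intro l hl
    apply ContinuousAt.continuousWithinAt
    have hray : Continuous fun l : ℝ => ((x, c + l • v) : (Fin n → ℂ) × (Fin n → ℝ)) := by
      fun_prop
    exact continuousAt_id.mul (ContinuousAt.comp
      (f := fun l : ℝ => ((x, c + l • v) : (Fin n → ℂ) × (Fin n → ℝ)))
      (mfun_continuousAt hc (hb l hl)) hray.continuousAt)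
  by_cases hcase : ∀ H ∈ I, 0 ≤ L H c * dL H v
  · -- whole ray is in the fiber
    have hmem : ∀ l : ℝ, 0 ≤ l → (x, c + l • v) ∈ U' 𝔽 c := by
      intro l hl
      refine memray l fun H hH => ?_
      have hHF : H ∈ 𝔽 := (Finset.mem_filter.1 hH).1
      have hpp : 0 < L H c * L H c := mul_self_pos.2 (hc H hHF)
      have := hcase H hH
      rw [L_ray]
      nlinarith
    have h0 : (fun l : ℝ => l * mfun 𝔽 c x (c + l • v)) 0 = 0 := by simp
    have h1 : 1 ≤ (fun l : ℝ => l * mfun 𝔽 c x (c + l • v)) 1 := by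
      simpa using one_le_mfun (𝔽 := 𝔽) (c := c) x (c + (1:ℝ) • v)
    have := intermediate_value_Icc (zero_le_one) (gcont 1 fun l hl => hmem l hl.1)
    have h1mem : (1:ℝ) ∈ Icc ((fun l : ℝ => l * mfun 𝔽 c x (c + l • v)) 0)
        ((fun l : ℝ => l * mfun 𝔽 c x (c + l • v)) 1) := by
      rw [h0]; exact ⟨zero_le_one, h1⟩
    obtain ⟨l, hl, hgl⟩ := this h1mem
    exact ⟨l, hmem l hl.1, hgl⟩
  · push_neg at hcase
    obtain ⟨H₀, hH₀I, hH₀⟩ := hcase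
    -- R := min over active H with negative slope of (pp H)/(-(e H))
    set J := I.filter (fun H => L H c * dL H v < 0) with hJ
    have hJne : J.Nonempty := ⟨H₀, Finset.mem_filter.2 ⟨hH₀I, hH₀⟩⟩
    obtain ⟨H₁, hH₁J, hH₁min⟩ := Finset.exists_min_image J
      (fun H => (L H c * L H c) / (-(L H c * dL H v))) hJne
    set R := (L H₁ c * L H₁ c) / (-(L H₁ c * dL H₁ v)) with hR
    have hH₁I : H₁ ∈ I := (Finset.mem_filter.1 hH₁J).1
    have hH₁F : H₁ ∈ 𝔽 := (Finset.mem_filter.1 hH₁I).1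
    have he₁ : L H₁ c * dL H₁ v < 0 := (Finset.mem_filter.1 hH₁J).2
    have hpp₁ : 0 < L H₁ c * L H₁ c := mul_self_pos.2 (hc H₁ hH₁F)
    have hRpos : 0 < R := div_pos hpp₁ (by linarith)
    -- membership for l ∈ [0, R)
    have hmem : ∀ l : ℝ, 0 ≤ l → l < R → (x, c + l • v) ∈ U' 𝔽 c := by
      intro l hl0 hlR
      refine memray l fun H hH => ?_
      have hHF : H ∈ 𝔽 := (Finset.mem_filter.1 hH).1
      have hpp : 0 < L H c * L H c := mul_self_pos.2 (hc H hHF)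
      rw [L_ray]
      rcases le_or_gt 0 (L H c * dL H v) with he | he
      · nlinarith
      · have hHJ : H ∈ J := Finset.mem_filter.2 ⟨hH, he⟩
        have hmin := hH₁min H hHJ
        -- l < R ≤ pp H / (-e H) so l * (-e H) < pp H
        have h2 : l * (-(L H c * dL H v)) < L H c * L H c := by
          have h3 : l < (L H c * L H c) / (-(L H c * dL H v)) := lt_of_lt_of_le hlR hmin
          calc l * (-(L H c * dL H v)) <
              ((L H c * L H c) / (-(L H c * dL H v))) * (-(L H c * dL H v)) := by
                apply mul_lt_mul_of_pos_right h3; linarith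
            _ = L H c * L H c := div_mul_cancel₀ _ (by linarith)
        nlinarith
    -- pick l₁ < R where g is at least 1
    set e₁ := L H₁ c * dL H₁ v with he₁def
    set pp₁ := L H₁ c * L H₁ c with hpp₁def
    set l₁ := max (R/2) ((pp₁ - Real.exp (-(2/R))) / (-e₁)) with hl₁def
    have hl₁R : l₁ < R := by
      apply max_lt (by linarith)
      have h2 : (pp₁ - Real.exp (-(2/R))) / (-e₁) < pp₁ / (-e₁) := by
        gcongr
        · linarith
        · linarith [Real.exp_pos (-(2/R))]
      exact h2.trans_eq hR.symm
    have hl₁half : R/2 ≤ l₁ := le_max_left _ _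
    have hl₁pos : 0 < l₁ := lt_of_lt_of_le (by linarith) hl₁half
    have hu₁pos : 0 < pp₁ + l₁ * e₁ := by
      have : l₁ * (-e₁) < R * (-e₁) := mul_lt_mul_of_pos_right hl₁R (by linarith)
      have hRe : R * (-e₁) = pp₁ := by
        rw [hR, div_mul_cancel₀ _ (by linarith : (-e₁) ≠ 0)]
      nlinarith
    have hu₁le : pp₁ + l₁ * e₁ ≤ Real.exp (-(2/R)) := by
      have h1 : (pp₁ - Real.exp (-(2/R))) / (-e₁) ≤ l₁ := le_max_right _ _
      have h2 : ((pp₁ - Real.exp (-(2/R))) / (-e₁)) * (-e₁) ≤ l₁ * (-e₁) :=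
        mul_le_mul_of_nonneg_right h1 (by linarith)
      rw [div_mul_cancel₀ _ (by linarith : -e₁ ≠ 0)] at h2
      linarith
    have hu₁lepp : pp₁ + l₁ * e₁ ≤ pp₁ := by nlinarith
    -- the Pfun term for H₁ at l₁ is at least 2/R
    have hLray : L H₁ c * L H₁ (c + l₁ • v) = pp₁ + l₁ * e₁ := by
      rw [L_ray]; ring
    have hLC₁ : LC H₁ x = 0 := (Finset.mem_filter.1 hH₁I).2
    have hPterm : 2/R ≤ Pfun ‖LC H₁ x‖ (min pp₁ (L H₁ c * L H₁ (c + l₁ • v))) := by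
      rw [hLC₁, norm_zero, hLray, min_eq_right hu₁lepp]
      exact Pfun_zero_ge hu₁pos hu₁le
    have hg₁ : 1 ≤ l₁ * mfun 𝔽 c x (c + l₁ • v) := by
      have hm : 2/R ≤ mfun 𝔽 c x (c + l₁ • v) := by
        refine le_trans hPterm ?_
        unfold mfun
        have hs := Finset.single_le_sum
          (f := fun H => Pfun ‖LC H x‖ (min (L H c * L H c) (L H c * L H (c + l₁ • v))))
          (fun H _ => Pfun_nonneg _ _) hH₁F
        linarith
      calc (1:ℝ) = (R/2) * (2/R) := by field_simp
        _ ≤ l₁ * mfun 𝔽 c x (c + l₁ • v) :=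
          mul_le_mul hl₁half hm (by positivity) hl₁pos.le
    -- IVT on [0, l₁]
    have hIccmem : ∀ l ∈ Icc (0:ℝ) l₁, (x, c + l • v) ∈ U' 𝔽 c := fun l hl =>
      hmem l hl.1 (lt_of_le_of_lt hl.2 hl₁R)
    have h0 : (fun l : ℝ => l * mfun 𝔽 c x (c + l • v)) 0 = 0 := by simp
    have h1mem : (1:ℝ) ∈ Icc ((fun l : ℝ => l * mfun 𝔽 c x (c + l • v)) 0)
        ((fun l : ℝ => l * mfun 𝔽 c x (c + l • v)) l₁) := by
      rw [h0]; exact ⟨zero_le_one, hg₁⟩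
    obtain ⟨l, hl, hgl⟩ := intermediate_value_Icc hl₁pos.le (gcont l₁ hIccmem) h1mem
    exact ⟨l, hIccmem l hl, hgl⟩

lemma PsiMap_isClosedMap (hc : ∀ H ∈ 𝔽, L H c ≠ 0) :
    IsClosedMap ((U' 𝔽 c).restrict (Psi 𝔽 c)) := by
  intro S hS
  apply IsSeqClosed.isClosed
  intro y p hy ht
  choose u hu hPu using hy
  -- coordinates
  have hx : Filter.Tendsto (fun k => (u k : (Fin n → ℂ) × (Fin n → ℝ)).1) Filter.atTop
      (nhds p.1) := by
    have : Filter.Tendsto (fun k => (y k).1) Filter.atTop (nhds p.1) :=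
      (continuous_fst.tendsto p).comp ht
    convert this using 2 with k
    rw [← hPu k]; rfl
  have hy2 : Filter.Tendsto (fun k => (y k).2) Filter.atTop (nhds p.2) :=
    (continuous_snd.tendsto p).comp ht
  have hnorm : Filter.Tendsto (fun k => ‖(y k).2 - c‖) Filter.atTop (nhds ‖p.2 - c‖) :=
    (continuous_norm.tendsto _).comp (hy2.sub tendsto_const_nhds)
  obtain ⟨B, hB⟩ := hnorm.bddAbove_range
  have hznorm : ∀ k, ‖(u k : (Fin n → ℂ) × (Fin n → ℝ)).2 - c‖ ≤ B := by
    intro k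
    have h1 : (y k).2 - c = mfun 𝔽 c (u k : (Fin n → ℂ) × (Fin n → ℝ)).1
        (u k : (Fin n → ℂ) × (Fin n → ℝ)).2 •
        ((u k : (Fin n → ℂ) × (Fin n → ℝ)).2 - c) := by
      rw [← hPu k]; show _ = _ ; simp [Psi, Set.restrict]
    have h2 : ‖(y k).2 - c‖ = mfun 𝔽 c (u k : (Fin n → ℂ) × (Fin n → ℝ)).1
        (u k : (Fin n → ℂ) × (Fin n → ℝ)).2 *
        ‖(u k : (Fin n → ℂ) × (Fin n → ℝ)).2 - c‖ := by
      rw [h1, norm_smul, Real.norm_of_nonneg (mfun_pos _ _).le]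
    have h3 : ‖(u k : (Fin n → ℂ) × (Fin n → ℝ)).2 - c‖ ≤ ‖(y k).2 - c‖ := by
      rw [h2]
      nlinarith [one_le_mfun (𝔽 := 𝔽) (c := c) (u k : (Fin n → ℂ) × (Fin n → ℝ)).1
        (u k : (Fin n → ℂ) × (Fin n → ℝ)).2, norm_nonneg
        ((u k : (Fin n → ℂ) × (Fin n → ℝ)).2 - c)]
    exact h3.trans (hB (Set.mem_range_self k))
  -- extract convergent subsequence of the z's
  have hmemball : ∀ k, (u k : (Fin n → ℂ) × (Fin n → ℝ)).2 ∈ Metric.closedBall c B := by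
    intro k
    rw [Metric.mem_closedBall, dist_eq_norm]
    exact hznorm k
  obtain ⟨zl, hzlmem, φ, hφ, hzconv⟩ :=
    (isCompact_closedBall c B).tendsto_subseq hmemball
  have hxφ : Filter.Tendsto (fun j => (u (φ j) : (Fin n → ℂ) × (Fin n → ℝ)).1) Filter.atTop
      (nhds p.1) := hx.comp hφ.tendsto_atTop
  -- the limit pair is in U'
  have hmemU : (p.1, zl) ∈ U' 𝔽 c := by
    by_contra hbad
    simp only [U', Set.mem_setOf_eq, not_forall] at hbad
    obtain ⟨H, hHF, hLC0, hbad2⟩ := hbad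
    have huu : L H c * L H zl ≤ 0 := not_lt.1 hbad2
    -- the Pfun term for H blows up along the subsequence
    have htt : Filter.Tendsto (fun j => ‖LC H (u (φ j) : (Fin n → ℂ) × (Fin n → ℝ)).1‖)
        Filter.atTop (nhds 0) := by
      have := ((continuous_norm.comp (LC_continuous H)).tendsto p.1).comp hxφ
      simpa [Function.comp_def, hLC0] using this
    have huuj : Filter.Tendsto (fun j => min (L H c * L H c)
        (L H c * L H (u (φ j) : (Fin n → ℂ) × (Fin n → ℝ)).2)) Filter.atTop
        (nhds (min (L H c * L H c) (L H c * L H zl))) :=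
      tendsto_const_nhds.min ((tendsto_const_nhds.mul ((L_continuous H).tendsto zl)).comp hzconv)
    have hsj : Filter.Tendsto (fun j => sfun ‖LC H (u (φ j) : (Fin n → ℂ) × (Fin n → ℝ)).1‖
        (min (L H c * L H c) (L H c * L H (u (φ j) : (Fin n → ℂ) × (Fin n → ℝ)).2)))
        Filter.atTop (nhds 0) := by
      have h1 := (sfun_continuous.tendsto ((0 : ℝ), min (L H c * L H c) (L H c * L H zl))).comp
        (htt.prodMk_nhds huuj)
      rwa [sfun_zero_of_nonpos (min_le_of_right_le huu)] at h1
    have hsjpos : ∀ j, 0 < sfun ‖LC H (u (φ j) : (Fin n → ℂ) × (Fin n → ℝ)).1‖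
        (min (L H c * L H c) (L H c * L H (u (φ j) : (Fin n → ℂ) × (Fin n → ℝ)).2)) :=
      fun j => sfun_arg_pos hc (u (φ j)).2 hHF
    have hlog : Filter.Tendsto (fun j => -Real.log
        (sfun ‖LC H (u (φ j) : (Fin n → ℂ) × (Fin n → ℝ)).1‖
        (min (L H c * L H c) (L H c * L H (u (φ j) : (Fin n → ℂ) × (Fin n → ℝ)).2))))
        Filter.atTop Filter.atTop := by
      apply Filter.tendsto_neg_atTop_iff.2
      exact Real.tendsto_log_nhdsGT_zero.comp
        (tendsto_nhdsWithin_of_tendsto_nhds_of_eventually_within _ hsj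
          (Filter.Eventually.of_forall fun j => hsjpos j))
    have hmf : Filter.Tendsto (fun j => mfun 𝔽 c ((u (φ j) : (Fin n → ℂ) × (Fin n → ℝ))).1 ((u (φ j) : (Fin n → ℂ) × (Fin n → ℝ))).2)
        Filter.atTop Filter.atTop := by
      apply Filter.tendsto_atTop_mono ?_ hlog
      intro j
      have h1 : -Real.log (sfun ‖LC H ((u (φ j) : (Fin n → ℂ) × (Fin n → ℝ))).1‖
          (min (L H c * L H c) (L H c * L H ((u (φ j) : (Fin n → ℂ) × (Fin n → ℝ))).2))) ≤
          Pfun ‖LC H ((u (φ j) : (Fin n → ℂ) × (Fin n → ℝ))).1‖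
          (min (L H c * L H c) (L H c * L H ((u (φ j) : (Fin n → ℂ) × (Fin n → ℝ))).2)) := le_max_right _ _
      have h2 := Finset.single_le_sum (f := fun H' => Pfun ‖LC H' ((u (φ j) : (Fin n → ℂ) × (Fin n → ℝ))).1‖
        (min (L H' c * L H' c) (L H' c * L H' ((u (φ j) : (Fin n → ℂ) × (Fin n → ℝ))).2)))
        (fun H' _ => Pfun_nonneg _ _) hHF
      unfold mfun
      linarith
    have hzlne : 0 < ‖zl - c‖ := by
      rw [norm_sub_pos_iff]
      intro hzc
      rw [hzc] at huu
      exact absurd huu (not_le.2 (mul_self_pos.2 (hc H hHF)))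
    have hznconv : Filter.Tendsto (fun j => ‖((u (φ j) : (Fin n → ℂ) × (Fin n → ℝ))).2 - c‖) Filter.atTop
        (nhds ‖zl - c‖) :=
      ((continuous_norm.comp (continuous_id.sub continuous_const)).tendsto zl).comp hzconv
    have hprod := hmf.atTop_mul_pos hzlne hznconv
    have heq : (fun j => mfun 𝔽 c ((u (φ j) : (Fin n → ℂ) × (Fin n → ℝ))).1 ((u (φ j) : (Fin n → ℂ) × (Fin n → ℝ))).2 * ‖((u (φ j) : (Fin n → ℂ) × (Fin n → ℝ))).2 - c‖) =
        fun j => ‖(y (φ j)).2 - c‖ := by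
      funext j
      rw [← hPu (φ j)]
      show _ = ‖(Psi 𝔽 c (u (φ j) : (Fin n → ℂ) × (Fin n → ℝ))).2 - c‖
      simp only [Psi]
      rw [add_sub_cancel_left, norm_smul, Real.norm_of_nonneg (mfun_pos _ _).le]
    rw [heq] at hprod
    exact not_tendsto_atTop_of_tendsto_nhds (hnorm.comp hφ.tendsto_atTop) hprod
  -- assemble the limit point and conclude
  refine ⟨⟨(p.1, zl), hmemU⟩, ?_, ?_⟩
  · have huconv0 : Filter.Tendsto (fun j => u (φ j)) Filter.atTop
        (nhds (⟨(p.1, zl), hmemU⟩ : (U' 𝔽 c).Elem)) := by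
      rw [Topology.IsEmbedding.subtypeVal.tendsto_nhds_iff]
      exact hxφ.prodMk_nhds hzconv
    exact hS.mem_of_tendsto huconv0 (Filter.Eventually.of_forall fun j => hu (φ j))
  · have huconv : Filter.Tendsto (fun j => u (φ j)) Filter.atTop
        (nhds (⟨(p.1, zl), hmemU⟩ : (U' 𝔽 c).Elem)) := by
      rw [Topology.IsEmbedding.subtypeVal.tendsto_nhds_iff]
      exact hxφ.prodMk_nhds hzconv
    have h1 : Filter.Tendsto (fun j => (U' 𝔽 c).restrict (Psi 𝔽 c) (u (φ j))) Filter.atTop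
        (nhds ((U' 𝔽 c).restrict (Psi 𝔽 c) ⟨(p.1, zl), hmemU⟩)) :=
      (((Psi_continuousOn hc).restrict).tendsto _).comp huconv
    have h2 : Filter.Tendsto (fun j => y (φ j)) Filter.atTop (nhds p) :=
      ht.comp hφ.tendsto_atTop
    have h3 : (fun j => (U' 𝔽 c).restrict (Psi 𝔽 c) (u (φ j))) = fun j => y (φ j) :=
      funext fun j => hPu (φ j)
    rw [h3] at h1
    exact tendsto_nhds_unique h1 h2

lemma exists_homeo (hc : ∀ H ∈ 𝔽, L H c ≠ 0) :
    ∃ φ : (U' 𝔽 c).Elem ≃ₜ (Fin n → ℂ) × (Fin n → ℝ),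
      ∀ u : (U' 𝔽 c).Elem, (φ u).1 = (u : (Fin n → ℂ) × (Fin n → ℝ)).1 := by
  have hbij : Function.Bijective ((U' 𝔽 c).restrict (Psi 𝔽 c)) := by
    constructor
    · intro u u' h
      exact Subtype.ext (Psi_inj hc u.1 u.2 u'.1 u'.2 h)
    · rintro ⟨x, w⟩
      obtain ⟨z, hz, hPz⟩ := Psi_surj hc x w
      exact ⟨⟨(x, z), hz⟩, hPz⟩
  have hcont : Continuous ((U' 𝔽 c).restrict (Psi 𝔽 c)) := (Psi_continuousOn hc).restrict
  have hopen : IsOpenMap ((U' 𝔽 c).restrict (Psi 𝔽 c)) := by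
    intro V hV
    have h1 := PsiMap_isClosedMap hc _ hV.isClosed_compl
    have h2 : (U' 𝔽 c).restrict (Psi 𝔽 c) '' V = ((U' 𝔽 c).restrict (Psi 𝔽 c) '' Vᶜ)ᶜ := by
      rw [Set.image_compl_eq hbij, compl_compl]
    rw [h2]
    exact h1.isOpen_compl
  exact ⟨(Equiv.ofBijective _ hbij).toHomeomorphOfContinuousOpen hcont hopen,
    fun u => rfl⟩

lemma L_combo {H : Hyperplane n} {a b : Fin n → ℝ} {s t : ℝ} (hst : s + t = 1) :
    L H (s • a + t • b) = s * L H a + t * L H b := by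
  have key : ∀ i, H.normal i * (s * a i + t * b i) =
      s * (H.normal i * a i) + t * (H.normal i * b i) := fun i => by ring
  simp only [L, Pi.add_apply, Pi.smul_apply, smul_eq_mul]
  rw [Finset.sum_congr rfl fun i _ => key i, Finset.sum_add_distrib,
    ← Finset.mul_sum, ← Finset.mul_sum]
  linear_combination (-H.const) * hst

lemma mem_carrier_iff {H : Hyperplane n} {z : Fin n → ℝ} : z ∈ H.carrier ↔ L H z = 0 :=
  Iff.rfl

lemma comp_eq_of_same_sign {H : Hyperplane n} {y y' : Fin n → ℝ}
    (h : 0 < L H y * L H y') :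
    connectedComponentIn H.carrierᶜ y = connectedComponentIn H.carrierᶜ y' := by
  set S : Set (Fin n → ℝ) := {w | 0 < L H y * L H w} with hS
  have hyne : L H y ≠ 0 := fun h0 => by rw [h0] at h; simp at h
  have hySmem : y ∈ S := mul_self_pos.2 hyne
  have hy'Smem : y' ∈ S := h
  have hconv : Convex ℝ S := by
    intro a ha b hb s t hs ht hst
    simp only [hS, Set.mem_setOf_eq] at ha hb ⊢
    rw [L_combo hst]
    have h3 : 0 < s * (L H y * L H a) + t * (L H y * L H b) := by
      rcases eq_or_lt_of_le hs with hs0 | hs0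
      · have ht1 : t = 1 := by linarith
        rw [← hs0, ht1]; simpa using hb
      · have := mul_pos hs0 ha
        nlinarith [mul_nonneg ht hb.le]
    nlinarith [h3]
  have hsub : S ⊆ H.carrierᶜ := by
    intro w hw
    simp only [Set.mem_compl_iff, mem_carrier_iff]
    intro h0
    simp only [hS, Set.mem_setOf_eq, h0, mul_zero] at hw
    exact lt_irrefl 0 hw
  have h1 : S ⊆ connectedComponentIn H.carrierᶜ y :=
    hconv.isPreconnected.subset_connectedComponentIn hySmem hsub
  exact connectedComponentIn_eq (h1 hy'Smem)

lemma pos_of_mem_comp {H : Hyperplane n} {y y' : Fin n → ℝ} (hy : L H y ≠ 0)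
    (h : y' ∈ connectedComponentIn H.carrierᶜ y) : 0 < L H y * L H y' := by
  have hsubc : connectedComponentIn H.carrierᶜ y ⊆ H.carrierᶜ :=
    connectedComponentIn_subset _ _
  have hy' : L H y' ≠ 0 := fun h0 => (hsubc h) h0
  have hymem : y ∈ connectedComponentIn H.carrierᶜ y :=
    mem_connectedComponentIn (by exact hy)
  by_contra hle
  push_neg at hle
  have hcontL : ContinuousOn (L H) (connectedComponentIn H.carrierᶜ y) :=
    (L_continuous H).continuousOn
  have hpre := isPreconnected_connectedComponentIn (F := H.carrierᶜ) (x := y)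
  have h0mem : (0:ℝ) ∈ L H '' connectedComponentIn H.carrierᶜ y := by
    rcases lt_or_gt_of_ne hy with hyneg | hypos
    · rcases lt_or_gt_of_ne hy' with hy'neg | hy'pos
      · nlinarith
      · exact hpre.intermediate_value hymem h hcontL ⟨hyneg.le, hy'pos.le⟩
    · rcases lt_or_gt_of_ne hy' with hy'neg | hy'pos
      · exact hpre.intermediate_value h hymem hcontL ⟨hy'neg.le, hypos.le⟩
      · nlinarith
  obtain ⟨w, hwmem, hw0⟩ := h0mem
  exact (hsubc hwmem) hw0

lemma sameSide_iff {A : Set (Hyperplane n)} {H : Hyperplane n} (hc : c ∈ complSet A)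
    (hH : H ∈ A) (z : Fin n → ℝ) :
    SameSide H (connectedComponentIn (complSet A) c) z ↔ 0 < L H c * L H z := by
  have hcc : L H c ≠ 0 := fun h0 => hc H hH h0
  constructor
  · rintro ⟨hz, hsub⟩
    have hzne : L H z ≠ 0 := hz
    have hcmem : c ∈ connectedComponentIn H.carrierᶜ z :=
      hsub (mem_connectedComponentIn hc)
    have := pos_of_mem_comp hzne hcmem
    nlinarith
  · intro hpos
    have hzne : L H z ≠ 0 := fun h0 => by rw [h0, mul_zero] at hpos; exact lt_irrefl 0 hpos
    refine ⟨hzne, ?_⟩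
    have hsub1 : complSet A ⊆ H.carrierᶜ := fun w hw => hw H hH
    have h1 : connectedComponentIn (complSet A) c ⊆ connectedComponentIn H.carrierᶜ c :=
      (isPreconnected_connectedComponentIn).subset_connectedComponentIn
        (mem_connectedComponentIn hc)
        ((connectedComponentIn_subset _ _).trans hsub1)
    rw [comp_eq_of_same_sign hpos] at h1
    exact h1

end
end UCAux

/-- For a chamber `C` of a finite arrangement `A` in `ℝ^n`, the projection
`U_C → ℂ^n`, `(x,z) ↦ x`, is a trivial fiber bundle with fiber `ℝ^n`: it is surjective, and
there is a homeomorphism `U_C ≃ ℂ^n × ℝ^n` commuting with the projections to `ℂ^n`. -/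
theorem UC_trivial_bundle (n : ℕ) (hn : 1 ≤ n) (A : Set (Hyperplane n)) (hA : A.Finite)
    (C : Set (Fin n → ℝ)) (hC : IsChamber A C) :
    (∀ x : Fin n → ℂ, ∃ z : Fin n → ℝ, (x, z) ∈ UC A C) ∧
    ∃ φ : (UC A C).Elem ≃ₜ (Fin n → ℂ) × (Fin n → ℝ),
      ∀ u : (UC A C).Elem, (φ u).1 = u.1.1 := by
  classical
  obtain ⟨c, hc, hCeq⟩ := hC
  subst hCeq
  have hcF : ∀ H ∈ hA.toFinset, UCAux.L H c ≠ 0 := by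
    intro H hH h0
    exact hc H (hA.mem_toFinset.1 hH) h0
  have hUCeq : UC A (connectedComponentIn (complSet A) c) = UCAux.U' hA.toFinset c := by
    ext p
    simp only [UC, UCAux.U', Set.mem_setOf_eq]
    constructor
    · intro h H hH hLC
      have hHA : H ∈ A := hA.mem_toFinset.1 hH
      exact (UCAux.sameSide_iff hc hHA p.2).1 (h H hHA hLC)
    · intro h H hHA hx
      exact (UCAux.sameSide_iff hc hHA p.2).2 (h H (hA.mem_toFinset.2 hHA) hx)
  constructor
  · intro x
    refine ⟨c, ?_⟩
    rw [hUCeq]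
    intro H hH _
    exact mul_self_pos.2 (hcF H hH)
  · obtain ⟨φ', hφ'⟩ := UCAux.exists_homeo hcF
    exact ⟨(Homeomorph.setCongr hUCeq).trans φ', fun u => hφ' _⟩
end

section
/- Let A be a finite set of affine hyperplanes in ℝ^n, let y ∈ ℝ^n, let A_y = { H ∈ A : y ∈ H }, and let D be a chamber of the subarrangement A_y. Then there exists exactly one chamber C of A such that C ⊆ D and y lies in the closure of C. -/
open Set

namespace ChamberAux

open Filter Topology

/-- The affine functional of a hyperplane. -/
def fn {n : ℕ} (H : Hyperplane n) (x : Fin n → ℝ) : ℝ :=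
  ∑ i, H.normal i * x i + H.const

lemma fn_continuous {n : ℕ} (H : Hyperplane n) : Continuous (fn H) := by
  unfold fn
  exact (continuous_finset_sum _ fun i _ => (continuous_const.mul (continuous_apply i))).add
    continuous_const

lemma mem_carrier_iff {n : ℕ} (H : Hyperplane n) (x : Fin n → ℝ) :
    x ∈ H.carrier ↔ fn H x = 0 := Iff.rfl

lemma mem_complSet_iff {n : ℕ} (A : Set (Hyperplane n)) (x : Fin n → ℝ) :
    x ∈ complSet A ↔ ∀ H ∈ A, fn H x ≠ 0 := Iff.rfl

lemma fn_affine {n : ℕ} (H : Hyperplane n) (a b : ℝ) (hab : a + b = 1) (x z : Fin n → ℝ) :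
    fn H (a • x + b • z) = a * fn H x + b * fn H z := by
  unfold fn
  have h : ∑ i, H.normal i * (a • x + b • z) i
      = a * ∑ i, H.normal i * x i + b * ∑ i, H.normal i * z i := by
    rw [Finset.mul_sum, Finset.mul_sum, ← Finset.sum_add_distrib]
    refine Finset.sum_congr rfl fun i _ => ?_
    simp only [Pi.add_apply, Pi.smul_apply, smul_eq_mul]
    ring
  rw [h]
  have h1 : H.const = (a + b) * H.const := by rw [hab]; ring
  linarith [h1, mul_add a (∑ i, H.normal i * x i) H.const,
    mul_add b (∑ i, H.normal i * z i) H.const]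

lemma sign_trans {a b c : ℝ} (h1 : 0 < a * b) (h2 : 0 < b * c) : 0 < a * c := by
  nlinarith [mul_pos h1 h2, sq_nonneg b]

lemma sq_pos_of_ne {a : ℝ} (h : a ≠ 0) : 0 < a * a := by
  rcases h.lt_or_gt with h | h
  · exact mul_pos_of_neg_of_neg h h
  · exact mul_pos h h

/-- Characterization of chambers: the connected component of `p` in the complement of a
finite arrangement is the set of points with the same sign pattern as `p`. -/
lemma component_eq {n : ℕ} (A : Set (Hyperplane n)) (hA : A.Finite)
    (p : Fin n → ℝ) (hp : p ∈ complSet A) :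
    connectedComponentIn (complSet A) p = {z | ∀ H ∈ A, 0 < fn H z * fn H p} := by
  set S : Set (Fin n → ℝ) := {z | ∀ H ∈ A, 0 < fn H z * fn H p} with hSdef
  have hpS : p ∈ S := fun H hH => sq_pos_of_ne ((mem_complSet_iff A p).1 hp H hH)
  have hSsub : S ⊆ complSet A := fun z hz H hH hzc => by
    have := hz H hH
    rw [mem_carrier_iff] at hzc
    rw [hzc, zero_mul] at this
    exact lt_irrefl _ this
  have hconv : Convex ℝ S := by
    intro x hx z hz a b ha hb hab
    intro H hH
    rw [fn_affine H a b hab x z, add_mul]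
    have hx' := hx H hH
    have hz' := hz H hH
    rcases eq_or_lt_of_le ha with h | h
    · have hb1 : b = 1 := by linarith
      simp only [← h, hb1]
      nlinarith
    · nlinarith [mul_nonneg hb hz'.le]
  have hopenS : IsOpen S := by
    have : S = ⋂ H ∈ A, {z | 0 < fn H z * fn H p} := by
      ext z; simp [hSdef, Set.mem_iInter]
    rw [this]
    exact hA.isOpen_biInter fun H _ =>
      isOpen_lt continuous_const ((fn_continuous H).mul continuous_const)
  apply le_antisymm
  · -- component ⊆ S
    intro z hz
    by_contra hzS
    have hT : IsPreconnected (connectedComponentIn (complSet A) p) :=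
      isPreconnected_connectedComponentIn
    have hTsub : connectedComponentIn (complSet A) p ⊆ complSet A :=
      connectedComponentIn_subset _ _
    set V : Set (Fin n → ℝ) := ⋃ H ∈ A, {z | fn H z * fn H p < 0} with hVdef
    have hopenV : IsOpen V :=
      isOpen_biUnion fun H _ =>
        isOpen_lt ((fn_continuous H).mul continuous_const) continuous_const
    have hcover : connectedComponentIn (complSet A) p ⊆ S ∪ V := by
      intro w hw
      by_cases hwS : w ∈ S
      · exact Or.inl hwS
      · right
        simp only [hSdef, Set.mem_setOf_eq, not_forall] at hwS
        obtain ⟨H, hH, hw'⟩ := hwS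
        refine Set.mem_biUnion hH ?_
        have hne : fn H w * fn H p ≠ 0 :=
          mul_ne_zero ((mem_complSet_iff A w).1 (hTsub hw) H hH)
            ((mem_complSet_iff A p).1 hp H hH)
        exact lt_of_le_of_ne (not_lt.1 hw') hne
    have hne1 : (connectedComponentIn (complSet A) p ∩ S).Nonempty :=
      ⟨p, mem_connectedComponentIn hp, hpS⟩
    have hne2 : (connectedComponentIn (complSet A) p ∩ V).Nonempty := by
      refine ⟨z, hz, ?_⟩
      simp only [hSdef, Set.mem_setOf_eq, not_forall] at hzS
      obtain ⟨H, hH, hz'⟩ := hzS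
      refine Set.mem_biUnion hH ?_
      have hne : fn H z * fn H p ≠ 0 :=
        mul_ne_zero ((mem_complSet_iff A z).1 (hTsub hz) H hH)
          ((mem_complSet_iff A p).1 hp H hH)
      exact lt_of_le_of_ne (not_lt.1 hz') hne
    obtain ⟨w, hwT, hwS, hwV⟩ := hT S V hopenS hopenV hcover hne1 hne2
    obtain ⟨H, hH, hw'⟩ := Set.mem_iUnion₂.1 hwV
    exact absurd (hwS H hH) (not_lt.2 hw'.le)
  · exact hconv.isPreconnected.subset_connectedComponentIn hpS hSsub

end ChamberAux

open Filter Topology ChamberAux in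
/-- Let `A` be a finite arrangement of hyperplanes in `ℝ^n`, `y ∈ ℝ^n`,
`A_y = {H ∈ A : y ∈ H}`, and let `D` be a chamber of the subarrangement `A_y`. Then there is
exactly one chamber `C` of `A` with `C ⊆ D` and `y` in the closure of `C`. -/
theorem existsUnique_chamber_adjacent (n : ℕ) (hn : 1 ≤ n)
    (A : Set (Hyperplane n)) (hA : A.Finite) (y : Fin n → ℝ)
    (D : Set (Fin n → ℝ)) (hD : IsChamber {H ∈ A | y ∈ H.carrier} D) :
    ∃! C : Set (Fin n → ℝ), IsChamber A C ∧ C ⊆ D ∧ y ∈ closure C := by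
  classical
  set Ay : Set (Hyperplane n) := {H ∈ A | y ∈ H.carrier} with hAydef
  have hAy : Ay.Finite := hA.subset (Set.sep_subset _ _)
  obtain ⟨x₀, hx₀, hDeq⟩ := hD
  -- choose a small ε > 0 such that moving from y towards x₀ keeps the sign of every
  -- functional not vanishing at y
  have hev : ∀ᶠ ε in 𝓝[>] (0:ℝ), ∀ H ∈ A, fn H y ≠ 0 →
      0 < fn H ((1-ε) • y + ε • x₀) * fn H y := by
    have hB : ({H ∈ A | fn H y ≠ 0} : Set (Hyperplane n)).Finite :=
      hA.subset (Set.sep_subset _ _)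
    have hmain : ∀ᶠ ε in 𝓝[>] (0:ℝ), ∀ H ∈ ({H ∈ A | fn H y ≠ 0} : Set (Hyperplane n)),
        0 < fn H ((1-ε) • y + ε • x₀) * fn H y := by
      rw [hB.eventually_all]
      rintro H ⟨hHA, hHy⟩
      have hcont : Continuous fun ε : ℝ => fn H ((1-ε) • y + ε • x₀) * fn H y :=
        ((fn_continuous H).comp
          (((continuous_const.sub continuous_id).smul continuous_const).add
            (continuous_id.smul continuous_const))).mul continuous_const
      have hc : Filter.Tendsto (fun ε : ℝ => fn H ((1-ε) • y + ε • x₀) * fn H y)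
          (𝓝 0) (𝓝 (fn H y * fn H y)) := by
        have := hcont.tendsto 0
        simpa using this
      have hpos : 0 < fn H y * fn H y := sq_pos_of_ne hHy
      have := hc (isOpen_Ioi.mem_nhds hpos)
      exact nhdsWithin_le_nhds this
    exact hmain.mono fun ε hε H hHA hHy => hε H ⟨hHA, hHy⟩
  have hgt0 : ∀ᶠ ε in 𝓝[>] (0:ℝ), 0 < ε := eventually_mem_nhdsWithin
  have hlt1 : ∀ᶠ ε in 𝓝[>] (0:ℝ), ε < 1 := by
    have : Set.Ioo (0:ℝ) 1 ∈ 𝓝[>] (0:ℝ) :=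
      Ioo_mem_nhdsGT_of_mem (by constructor <;> norm_num)
    exact Filter.eventually_of_mem this fun x hx => hx.2
  obtain ⟨ε, hεprop, hε0, hε1⟩ := (hev.and (hgt0.and hlt1)).exists
  set p : Fin n → ℝ := (1-ε) • y + ε • x₀ with hpdef
  have hfp : ∀ H : Hyperplane n, fn H p = (1-ε) * fn H y + ε * fn H x₀ := fun H =>
    fn_affine H (1-ε) ε (by ring) y x₀
  have hx₀' : ∀ H ∈ A, fn H y = 0 → fn H x₀ ≠ 0 := fun H hHA hHy =>
    (mem_complSet_iff Ay x₀).1 hx₀ H ⟨hHA, (mem_carrier_iff H y).2 hHy⟩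
  have hp_compl : p ∈ complSet A := by
    intro H hH hc
    rw [mem_carrier_iff] at hc
    by_cases hy0 : fn H y = 0
    · have h1 := hx₀' H hH hy0
      rw [hfp H, hy0] at hc
      have hmul : ε * fn H x₀ = 0 := by linarith
      exact h1 ((mul_eq_zero.1 hmul).resolve_left hε0.ne')
    · have h2 := hεprop H hH hy0
      rw [hc, zero_mul] at h2
      exact lt_irrefl _ h2
  have hC : connectedComponentIn (complSet A) p = {z | ∀ H ∈ A, 0 < fn H z * fn H p} :=
    component_eq A hA p hp_compl
  have hD' : D = {z | ∀ H ∈ Ay, 0 < fn H z * fn H x₀} := by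
    rw [hDeq]; exact component_eq Ay hAy x₀ hx₀
  have hfpAy : ∀ H ∈ Ay, fn H p = ε * fn H x₀ := by
    intro H hH
    rw [hfp H, (mem_carrier_iff H y).1 hH.2]
    ring
  have hsubD : connectedComponentIn (complSet A) p ⊆ D := by
    intro z hz
    rw [hC] at hz
    rw [hD']
    intro H hH
    have h := hz H hH.1
    rw [hfpAy H hH] at h
    have h2 : fn H z * (ε * fn H x₀) = ε * (fn H z * fn H x₀) := by ring
    rw [h2] at h
    exact (mul_pos_iff_of_pos_left hε0).1 h
  have hyC : y ∈ closure (connectedComponentIn (complSet A) p) := by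
    set q : ℕ → (Fin n → ℝ) := fun k => ((1:ℝ)/(k+1)) • p + (1 - (1:ℝ)/(k+1)) • y with hqdef
    have hqmem : ∀ k : ℕ, q k ∈ connectedComponentIn (complSet A) p := by
      intro k
      rw [hC]
      intro H hH
      have ht0 : 0 < (1:ℝ)/(k+1) := by positivity
      have ht1 : (1:ℝ)/(k+1) ≤ 1 := by
        rw [div_le_one (by positivity)]
        have : (0:ℝ) ≤ (k:ℝ) := Nat.cast_nonneg k
        linarith
      have hPne : fn H p ≠ 0 := (mem_complSet_iff A p).1 hp_compl H hH
      have hPP : 0 < fn H p * fn H p := sq_pos_of_ne hPne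
      rw [hqdef]
      simp only
      rw [fn_affine H ((1:ℝ)/(k+1)) (1 - (1:ℝ)/(k+1)) (by ring) p y]
      by_cases hy0 : fn H y = 0
      · rw [hy0]
        nlinarith [mul_pos ht0 hPP]
      · have hPY : 0 < fn H p * fn H y := hεprop H hH hy0
        nlinarith [mul_pos ht0 hPP, mul_nonneg (sub_nonneg.2 ht1) hPY.le]
    have hqt : Filter.Tendsto q Filter.atTop (𝓝 y) := by
      have htt : Filter.Tendsto (fun k : ℕ => (1:ℝ)/(k+1)) Filter.atTop (𝓝 0) :=
        tendsto_one_div_add_atTop_nhds_zero_nat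
      have h1 : Filter.Tendsto q Filter.atTop (𝓝 ((0:ℝ) • p + (1 - (0:ℝ)) • y)) :=
        (htt.smul_const p).add ((tendsto_const_nhds.sub htt).smul_const y)
      simpa using h1
    exact mem_closure_of_tendsto hqt (Filter.Eventually.of_forall hqmem)
  refine ⟨connectedComponentIn (complSet A) p, ⟨⟨p, hp_compl, rfl⟩, hsubD, hyC⟩, ?_⟩
  rintro C' ⟨⟨p', hp', rfl⟩, hsub, hycl⟩
  have hC' : connectedComponentIn (complSet A) p' = {z | ∀ H ∈ A, 0 < fn H z * fn H p'} :=
    component_eq A hA p' hp'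
  have hp'C' : p' ∈ connectedComponentIn (complSet A) p' := mem_connectedComponentIn hp'
  have hsame : ∀ H ∈ A, 0 < fn H p' * fn H p := by
    intro H hH
    by_cases hy0 : fn H y = 0
    · have hHAy : H ∈ Ay := ⟨hH, (mem_carrier_iff H y).2 hy0⟩
      have h1 : 0 < fn H p' * fn H x₀ := by
        have := hsub hp'C'
        rw [hD'] at this
        exact this H hHAy
      rw [hfpAy H hHAy]
      have h2 : fn H p' * (ε * fn H x₀) = ε * (fn H p' * fn H x₀) := by ring
      rw [h2]
      exact mul_pos hε0 h1
    · have hstep : 0 ≤ fn H y * fn H p' := by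
        have hclosed : IsClosed {w : Fin n → ℝ | 0 ≤ fn H w * fn H p'} :=
          isClosed_le continuous_const ((fn_continuous H).mul continuous_const)
        have hsub2 : connectedComponentIn (complSet A) p' ⊆
            {w : Fin n → ℝ | 0 ≤ fn H w * fn H p'} := by
          rw [hC']
          intro w hw
          exact (hw H hH).le
        exact (hclosed.closure_subset_iff.2 hsub2) hycl
      have hyne : fn H y * fn H p' ≠ 0 :=
        mul_ne_zero hy0 ((mem_complSet_iff A p').1 hp' H hH)
      have h1 : 0 < fn H y * fn H p' := lt_of_le_of_ne hstep (Ne.symm hyne)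
      have h2 : 0 < fn H p * fn H y := hεprop H hH hy0
      exact sign_trans (by rw [mul_comm]; exact h1) (by rw [mul_comm]; exact h2)
  rw [hC', hC]
  ext z
  simp only [Set.mem_setOf_eq]
  constructor
  · intro hz H hH
    exact sign_trans (hz H hH) (hsame H hH)
  · intro hz H hH
    exact sign_trans (hz H hH) (by rw [mul_comm]; exact hsame H hH)
end

section
/- Let K be a finite set with |K| = k and let n be a natural number. Then the number of pairs (f, ω), where f : Fin n → K is a function and ω assigns to each a ∈ K a linear order on the fiber f⁻¹(a), equals the rising factorial k(k+1)⋯(k+n−1). -/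
open Finset

noncomputable def linOfRel {α : Type*} (r : α → α → Prop) (hr : IsLinearOrder α r) :
    LinearOrder α where
  le := r
  lt a b := r a b ∧ ¬ r b a
  le_refl := hr.toIsPartialOrder.toIsPreorder.toRefl.refl
  le_trans := hr.toIsPartialOrder.toIsPreorder.toIsTrans.trans
  lt_iff_le_not_ge _ _ := Iff.rfl
  le_antisymm := hr.toIsPartialOrder.toAntisymm.antisymm
  le_total := hr.toTotal.total
  toDecidableLE := Classical.decRel r

lemma pullback_lin {α : Type*} {m : ℕ} (e : α ≃ Fin m) :
    IsLinearOrder α (fun a b => e a ≤ e b) :=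
  { refl := fun a => le_refl _
    trans := fun _ _ _ h1 h2 => le_trans h1 h2
    antisymm := fun _ _ h1 h2 => e.injective (le_antisymm h1 h2)
    total := fun _ _ => le_total _ _ }

lemma card_linearOrders (α : Type*) [Fintype α] :
    Nat.card {r : α → α → Prop // IsLinearOrder α r} = (Fintype.card α).factorial := by
  classical
  have e : (α ≃ Fin (Fintype.card α)) ≃ {r : α → α → Prop // IsLinearOrder α r} :=
    { toFun := fun e => ⟨fun a b => e a ≤ e b, pullback_lin e⟩
      invFun := fun p => letI := linOfRel p.1 p.2; (monoEquivOfFin α rfl).symm.toEquiv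
      left_inv := fun e => by
        letI := linOfRel _ (pullback_lin e)
        have he : ((monoEquivOfFin α rfl).symm : α ≃o Fin (Fintype.card α)) =
            ({ toEquiv := e, map_rel_iff' := Iff.rfl } : α ≃o Fin (Fintype.card α)) :=
          Subsingleton.elim _ _
        exact congrArg (fun (i : α ≃o Fin (Fintype.card α)) => i.toEquiv) he
      right_inv := fun p => by
        letI := linOfRel p.1 p.2
        refine Subtype.ext ?_
        funext a b
        exact propext ((monoEquivOfFin α rfl).symm.le_iff_le) }
  rw [← Nat.card_congr e, Nat.card_eq_fintype_card, Fintype.card_equiv (Fintype.equivFin α)]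

lemma fiber_card_cons {K : Type} [DecidableEq K] {n : ℕ} (a : K) (g : Fin n → K) (b : K) :
    Fintype.card {i : Fin (n+1) // (Fin.cons a g : Fin (n+1) → K) i = b} =
      (if a = b then 1 else 0) + Fintype.card {j : Fin n // g j = b} := by
  rw [Fintype.card_subtype, Fintype.card_subtype, Finset.card_filter, Finset.card_filter,
    Fin.sum_univ_succ]
  simp [Fin.cons_zero, Fin.cons_succ]

lemma fiber_sum {K : Type} [Fintype K] [DecidableEq K] {n : ℕ} (g : Fin n → K) :
    ∑ a : K, Fintype.card {j : Fin n // g j = a} = n := by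
  rw [← Fintype.card_sigma, Fintype.card_congr (Equiv.sigmaFiberEquiv g), Fintype.card_fin]

lemma sum_prod_factorial (K : Type) [Fintype K] [DecidableEq K] :
    ∀ n : ℕ, ∑ f : Fin n → K, ∏ a : K, (Fintype.card {i : Fin n // f i = a}).factorial
      = (Fintype.card K).ascFactorial n := by
  intro n
  induction n with
  | zero =>
    simp [Fintype.card_eq_zero]
  | succ n ih =>
    rw [Nat.ascFactorial_succ, ← ih]
    rw [← Equiv.sum_comp (Fin.consEquiv (fun _ : Fin (n+1) => K))]
    rw [Fintype.sum_prod_type]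
    simp only [Fin.consEquiv_apply]
    have key : ∀ (a : K) (g : Fin n → K),
        ∏ b : K, (Fintype.card {i : Fin (n+1) // (Fin.cons a g : Fin (n+1) → K) i = b}).factorial
        = (Fintype.card {j : Fin n // g j = a} + 1) *
          ∏ b : K, (Fintype.card {j : Fin n // g j = b}).factorial := by
      intro a g
      simp only [fiber_card_cons]
      set m : K → ℕ := fun b => Fintype.card {j : Fin n // g j = b} with hm
      rw [← Finset.mul_prod_erase univ _ (mem_univ a),
          ← Finset.mul_prod_erase univ (fun b => (m b).factorial) (mem_univ a)]
      have h1 : ∀ b ∈ univ.erase a, ((if a = b then 1 else 0) + m b).factorial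
          = (m b).factorial := by
        intro b hb
        rw [if_neg (Ne.symm (Finset.ne_of_mem_erase hb)), Nat.zero_add]
      rw [Finset.prod_congr rfl h1, if_pos rfl, Nat.add_comm 1 (m a), Nat.factorial_succ,
        Nat.mul_assoc]
    simp only [key]
    rw [Finset.sum_comm, Finset.mul_sum]
    refine Finset.sum_congr rfl fun g _ => ?_
    have hs : ∑ a : K, (Fintype.card {j : Fin n // g j = a} + 1) = Fintype.card K + n := by
      rw [Finset.sum_add_distrib, fiber_sum, Finset.sum_const, smul_eq_mul, mul_one,
        Finset.card_univ, Nat.add_comm]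
    rw [← Finset.sum_mul, hs]


/-- Let `K` be a finite set with `|K| = k` and `n` a natural number.
The number of pairs `(f, ω)`, where `f : Fin n → K` and `ω` assigns to each `a ∈ K` a
linear order on the fiber `f⁻¹(a)`, equals the rising factorial `k(k+1)⋯(k+n−1)`. -/
theorem card_functions_with_fiber_orders (n k : ℕ) (K : Type) [Fintype K]
    (hk : Fintype.card K = k) :
    Nat.card ((f : Fin n → K) ×
        (∀ a : K, {r : {i : Fin n // f i = a} → {i : Fin n // f i = a} → Prop //
          IsLinearOrder {i : Fin n // f i = a} r})) = Nat.ascFactorial k n := by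
  classical
  subst hk
  rw [Nat.card_eq_fintype_card, Fintype.card_sigma]
  simp_rw [Fintype.card_pi]
  have h : ∀ (f : Fin n → K) (a : K),
      Fintype.card {r : {i : Fin n // f i = a} → {i : Fin n // f i = a} → Prop //
        IsLinearOrder {i : Fin n // f i = a} r}
        = (Fintype.card {i : Fin n // f i = a}).factorial := by
    intro f a
    rw [← Nat.card_eq_fintype_card, card_linearOrders]
  simp_rw [h]
  exact sum_prod_factorial K n
end

section
/- Let K be a finite set and n a natural number, and let P be the set of pairs (f, ω) where f : Fin n → K and ω assigns to each a ∈ K a linear order on the fiber f⁻¹(a). The symmetric group of Fin n acts on P by σ • (f, ω) = (f ∘ σ⁻¹, σ_*ω), where σ_*ω orders the fiber (f ∘ σ⁻¹)⁻¹(a) = σ(f⁻¹(a)) by declaring σ(x) ≤ σ(y) iff x ≤_{ω_a} y. This action is free (only the identity permutation fixes some pair), and two pairs (f, ω) and (g, ω') lie in the same orbit if and only if f and g have the same multiset of values, i.e. Multiset.map f Finset.univ.val = Multiset.map g Finset.univ.val. Consequently every orbit has exactly n! elements and the orbits are in bijection with multisets of size n of elements of K. -/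
/-- The fiber `f⁻¹(a)` of `f : Fin n → K` over `a`. -/
abbrev FnFiber (n : ℕ) {K : Type} (f : Fin n → K) (a : K) : Type := {i : Fin n // f i = a}

/-- A linear order on the fiber `f⁻¹(a)`, as an order relation. -/
def FiberOrder (n : ℕ) {K : Type} (f : Fin n → K) (a : K) : Type :=
  {r : FnFiber n f a → FnFiber n f a → Prop // IsLinearOrder (FnFiber n f a) r}

/-- The set `P` of pairs `(f, ω)`: a function `f : Fin n → K` together with, for each
`a ∈ K`, a linear order `ω a` on the fiber `f⁻¹(a)`. -/
def OrderedFiberPair (n : ℕ) (K : Type) : Type :=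
  (f : Fin n → K) × (∀ a : K, FiberOrder n f a)

section Aux
variable {n : ℕ} {K : Type}

/-- extensionality -/
theorem pair_ext' (p q : OrderedFiberPair n K) (h1 : p.1 = q.1)
    (h2 : ∀ (a : K) (x y : Fin n) (hx : p.1 x = a) (hy : p.1 y = a)
      (hx' : q.1 x = a) (hy' : q.1 y = a),
      (p.2 a).1 ⟨x, hx⟩ ⟨y, hy⟩ ↔ (q.2 a).1 ⟨x, hx'⟩ ⟨y, hy'⟩) : p = q := by
  obtain ⟨f, w⟩ := p; obtain ⟨g, w'⟩ := q
  dsimp at h1 h2; subst h1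
  have : w = w' := by
    funext a
    apply Subtype.ext
    funext x y
    exact propext (h2 a x.1 y.1 x.2 y.2 x.2 y.2)
  rw [this]

noncomputable def mkLinearOrder {α : Type*} (r : α → α → Prop) (w : IsLinearOrder α r) :
    LinearOrder α :=
  letI pre : Preorder α :=
    { le := r
      lt := fun x y => r x y ∧ ¬ r y x
      lt_iff_le_not_ge := fun _ _ => Iff.rfl
      le_refl := w.toIsPartialOrder.toIsPreorder.toRefl.refl
      le_trans := w.toIsPartialOrder.toIsPreorder.toIsTrans.trans }
  letI po : PartialOrder α :=
    { pre with le_antisymm := w.toIsPartialOrder.toAntisymm.antisymm }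
  letI dec : DecidableRel r := fun _ _ => Classical.propDecidable _
  letI deq : DecidableEq α := fun _ _ => Classical.propDecidable _
  letI dlt : DecidableRel po.lt := fun _ _ => Classical.propDecidable _
  { po with
    le_total := w.toTotal.total
    toDecidableLE := dec
    toDecidableEq := deq
    toDecidableLT := dlt
    min := fun x y => if r x y then x else y
    max := fun x y => if r x y then y else x
    min_def := fun _ _ => rfl
    max_def := fun _ _ => rfl
    compare := fun x y => @compareOfLessAndEq _ x y ⟨po.lt⟩ (dlt x y) deq
    compare_eq_compareOfLessAndEq := fun x y => rfl }


/-- An equivalence of a finite linearly ordered type with itself preserving the order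
is the identity. -/
theorem eq_self_of_orderPreserving {α : Type*} [Finite α] (r : α → α → Prop)
    (hr : IsLinearOrder α r) (e : α ≃ α) (he : ∀ x y, r (e x) (e y) ↔ r x y) :
    ∀ x, e x = x := by
  letI := mkLinearOrder r hr
  haveI : WellFoundedLT α := Finite.to_wellFoundedLT
  let iso : α ≃o α := { e with map_rel_iff' := he _ _ }
  have hiso : iso = OrderIso.refl α := Subsingleton.elim _ _
  intro x
  have : iso x = (OrderIso.refl α) x := by rw [hiso]
  exact this

/-- Two finite linearly ordered types of the same cardinality admit a unique order
isomorphism; here we only need existence. -/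
theorem exists_orderIso {α β : Type*} [Finite α] [Finite β]
    (r : α → α → Prop) (hr : IsLinearOrder α r) (r' : β → β → Prop) (hr' : IsLinearOrder β r')
    (hc : Nat.card α = Nat.card β) :
    ∃ e : α ≃ β, ∀ x y, r' (e x) (e y) ↔ r x y := by
  letI := mkLinearOrder r hr
  letI := mkLinearOrder r' hr'
  haveI : Fintype α := Fintype.ofFinite α
  haveI : Fintype β := Fintype.ofFinite β
  have hc' : Fintype.card α = Fintype.card β := by
    simpa [Nat.card_eq_fintype_card] using hc
  let e : α ≃o β := (monoEquivOfFin α rfl).symm.trans (monoEquivOfFin β hc'.symm)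
  exact ⟨e.toEquiv, fun x y => e.map_rel_iff⟩

def relOf (p : OrderedFiberPair n K) (i j : Fin n) : Prop :=
  ∃ h : p.1 i = p.1 j, (p.2 (p.1 j)).1 ⟨i, h⟩ ⟨j, rfl⟩

lemma relOf_iff (p : OrderedFiberPair n K) (a : K) (x y : FnFiber n p.1 a) :
    relOf p x.1 y.1 ↔ (p.2 a).1 x y := by
  obtain ⟨x, hx⟩ := x; obtain ⟨y, hy⟩ := y
  subst hy
  constructor
  · rintro ⟨h, hr⟩; exact hr
  · intro hr; exact ⟨hx.trans rfl, hr⟩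

def defaultOrder (f : Fin n → K) (a : K) : FiberOrder n f a :=
  ⟨fun x y => x.1 ≤ y.1,
   { refl := fun x => le_refl _
     trans := fun x y z h h' => le_trans h h'
     antisymm := fun x y h h' => Subtype.ext (le_antisymm h h')
     total := fun x y => le_total x.1 y.1 }⟩

lemma exists_fn (m : Multiset K) (hm : Multiset.card m = n) :
    ∃ f : Fin n → K, Multiset.map f Finset.univ.val = m := by
  revert hm
  refine Quotient.inductionOn m fun l hm => ?_
  simp only [Multiset.quot_mk_to_coe, Multiset.coe_card] at hm ⊢
  subst hm
  refine ⟨l.get, ?_⟩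
  have huniv : (Finset.univ.val : Multiset (Fin l.length)) = ↑(List.finRange l.length) := by
    rw [Fin.univ_def]
  rw [huniv, Multiset.map_coe, List.map_get_finRange]

end Aux

/-- Pullback of a linear order along an equivalence. -/
theorem IsLinearOrder.pullback {α β : Type*} (e : α ≃ β) (r : β → β → Prop)
    (h : IsLinearOrder β r) : IsLinearOrder α (fun x y => r (e x) (e y)) where
  refl a := h.toIsPartialOrder.toIsPreorder.toRefl.refl (e a)
  trans a b c hab hbc :=
    h.toIsPartialOrder.toIsPreorder.toIsTrans.trans (e a) (e b) (e c) hab hbc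
  antisymm a b hab hba :=
    e.injective (h.toIsPartialOrder.toAntisymm.antisymm (e a) (e b) hab hba)
  total a b := h.toTotal.total (e a) (e b)

/-- The equivalence `(f ∘ σ⁻¹)⁻¹(a) ≃ f⁻¹(a)`, `x ↦ σ⁻¹ x`. -/
def fiberEquiv {n : ℕ} {K : Type} (σ : Equiv.Perm (Fin n)) (f : Fin n → K) (a : K) :
    FnFiber n (f ∘ ⇑σ⁻¹) a ≃ FnFiber n f a where
  toFun x := ⟨σ⁻¹ x.1, x.2⟩
  invFun y := ⟨σ y.1, by simpa using y.2⟩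
  left_inv x := Subtype.ext (by simp)
  right_inv y := Subtype.ext (by simp)

/-- The action of `σ ∈ Perm (Fin n)` on pairs `(f, ω)`: `σ • (f, ω) = (f ∘ σ⁻¹, σ_*ω)`,
where `σ_*ω` orders the fiber `(f ∘ σ⁻¹)⁻¹(a) = σ(f⁻¹(a))` by `σ x ≤ σ y ↔ x ≤_{ω a} y`. -/
def permSmul {n : ℕ} {K : Type} (σ : Equiv.Perm (Fin n)) (p : OrderedFiberPair n K) :
    OrderedFiberPair n K :=
  ⟨p.1 ∘ ⇑σ⁻¹, fun a =>
    ⟨fun x y => (p.2 a).1 (fiberEquiv σ p.1 a x) (fiberEquiv σ p.1 a y),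
      IsLinearOrder.pullback (fiberEquiv σ p.1 a) (p.2 a).1 (p.2 a).2⟩⟩

section Main
variable {n : ℕ} {K : Type}

theorem my_one_smul (p : OrderedFiberPair n K) : permSmul 1 p = p := by
  apply pair_ext'
  · funext i; rfl
  · intro a x y hx hy hx' hy'
    show (p.2 a).1 ⟨(1 : Equiv.Perm (Fin n))⁻¹ x, hx⟩ ⟨(1 : Equiv.Perm (Fin n))⁻¹ y, hy⟩ ↔
      (p.2 a).1 ⟨x, hx'⟩ ⟨y, hy'⟩
    have e1 : (⟨(1 : Equiv.Perm (Fin n))⁻¹ x, hx⟩ : FnFiber n p.1 a) = ⟨x, hx'⟩ :=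
      Subtype.ext (by simp)
    have e2 : (⟨(1 : Equiv.Perm (Fin n))⁻¹ y, hy⟩ : FnFiber n p.1 a) = ⟨y, hy'⟩ :=
      Subtype.ext (by simp)
    rw [e1, e2]

theorem my_mul_smul (σ τ : Equiv.Perm (Fin n)) (p : OrderedFiberPair n K) :
    permSmul (σ * τ) p = permSmul σ (permSmul τ p) := by
  apply pair_ext'
  · funext i; show p.1 ((σ * τ)⁻¹ i) = p.1 (τ⁻¹ (σ⁻¹ i)); simp
  · intro a x y hx hy hx' hy'
    show (p.2 a).1 ⟨(σ * τ)⁻¹ x, hx⟩ ⟨(σ * τ)⁻¹ y, hy⟩ ↔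
      (p.2 a).1 ⟨τ⁻¹ (σ⁻¹ x), hx'⟩ ⟨τ⁻¹ (σ⁻¹ y), hy'⟩
    have e1 : (⟨(σ * τ)⁻¹ x, hx⟩ : FnFiber n p.1 a) = ⟨τ⁻¹ (σ⁻¹ x), hx'⟩ :=
      Subtype.ext (by simp)
    have e2 : (⟨(σ * τ)⁻¹ y, hy⟩ : FnFiber n p.1 a) = ⟨τ⁻¹ (σ⁻¹ y), hy'⟩ :=
      Subtype.ext (by simp)
    rw [e1, e2]

theorem my_free (σ : Equiv.Perm (Fin n)) (p : OrderedFiberPair n K)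
    (h : permSmul σ p = p) : σ = 1 := by
  have hf : p.1 ∘ ⇑σ⁻¹ = p.1 := congrArg Sigma.fst h
  have hf' : ∀ i, p.1 (σ⁻¹ i) = p.1 i := fun i => congrFun hf i
  have hrel : ∀ i j, relOf p (σ⁻¹ i) (σ⁻¹ j) ↔ relOf p i j := by
    intro i j
    conv_rhs => rw [← h]
    exact Iff.rfl
  have key : ∀ (a : K) (x : FnFiber n p.1 a), σ⁻¹ x.1 = x.1 := by
    intro a
    let e : FnFiber n p.1 a ≃ FnFiber n p.1 a :=
      { toFun := fun x => ⟨σ⁻¹ x.1, by rw [hf' x.1, x.2]⟩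
        invFun := fun x => ⟨σ x.1, by rw [← hf' (σ x.1)]; simpa using x.2⟩
        left_inv := fun x => Subtype.ext (by simp)
        right_inv := fun x => Subtype.ext (by simp) }
    have mono : ∀ x y : FnFiber n p.1 a, (p.2 a).1 (e x) (e y) ↔ (p.2 a).1 x y := by
      intro x y
      rw [← relOf_iff p a (e x) (e y), ← relOf_iff p a x y]
      exact hrel x.1 y.1
    have := eq_self_of_orderPreserving (p.2 a).1 (p.2 a).2 e mono
    intro x
    exact congrArg Subtype.val (this x)
  have hinv : σ⁻¹ = 1 := by
    apply Equiv.ext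
    intro i
    exact key (p.1 i) ⟨i, rfl⟩
  simpa using congrArg Inv.inv hinv

end Main

section Part4
variable {n : ℕ} {K : Type}

lemma card_fiber [DecidableEq K] (f : Fin n → K) (a : K) :
    Nat.card (FnFiber n f a) = Multiset.count a (Multiset.map f Finset.univ.val) := by
  rw [Nat.card_eq_fintype_card, Fintype.card_subtype, Multiset.count_map]
  simp [Finset.card, Finset.filter, eq_comm]

theorem my_orbit [Fintype K] (p q : OrderedFiberPair n K) :
    (∃ σ : Equiv.Perm (Fin n), permSmul σ p = q) ↔
      Multiset.map p.1 Finset.univ.val = Multiset.map q.1 Finset.univ.val := by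
  constructor
  · rintro ⟨σ, rfl⟩
    show Multiset.map p.1 Finset.univ.val = Multiset.map (p.1 ∘ ⇑σ⁻¹) Finset.univ.val
    rw [← Multiset.map_map]
    congr 1
    have h := Finset.map_univ_equiv (σ⁻¹ : Equiv.Perm (Fin n))
    have : Multiset.map (⇑σ⁻¹) Finset.univ.val
        = (Finset.univ.map (σ⁻¹ : Equiv.Perm (Fin n)).toEmbedding).val := by
      rw [Finset.map_val]; rfl
    rw [this, h]
  · intro hm
    classical
    have hcard : ∀ a, Nat.card (FnFiber n q.1 a) = Nat.card (FnFiber n p.1 a) := by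
      intro a; rw [card_fiber, card_fiber, hm]
    have hEa : ∀ a, ∃ e : FnFiber n q.1 a ≃ FnFiber n p.1 a,
        ∀ x y, (p.2 a).1 (e x) (e y) ↔ (q.2 a).1 x y :=
      fun a => exists_orderIso (q.2 a).1 (q.2 a).2 (p.2 a).1 (p.2 a).2 (hcard a)
    choose E hE using hEa
    let σ : Equiv.Perm (Fin n) :=
      (Equiv.sigmaFiberEquiv p.1).symm.trans
        ((Equiv.sigmaCongrRight fun a => (E a).symm).trans (Equiv.sigmaFiberEquiv q.1))
    have hσ : ∀ (a : K) (u : FnFiber n q.1 a), σ⁻¹ u.1 = (E a u).1 := by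
      rintro a ⟨j, hj⟩
      subst hj
      rfl
    refine ⟨σ, pair_ext' _ _ ?_ ?_⟩
    · funext j
      show p.1 (σ⁻¹ j) = q.1 j
      rw [hσ (q.1 j) ⟨j, rfl⟩]
      exact (E (q.1 j) ⟨j, rfl⟩).2
    · intro a x y hx hy hx' hy'
      show (p.2 a).1 ⟨σ⁻¹ x, hx⟩ ⟨σ⁻¹ y, hy⟩ ↔ (q.2 a).1 ⟨x, hx'⟩ ⟨y, hy'⟩
      have ex : (⟨σ⁻¹ x, hx⟩ : FnFiber n p.1 a) = E a ⟨x, hx'⟩ :=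
        Subtype.ext (hσ a ⟨x, hx'⟩)
      have ey : (⟨σ⁻¹ y, hy⟩ : FnFiber n p.1 a) = E a ⟨y, hy'⟩ :=
        Subtype.ext (hσ a ⟨y, hy'⟩)
      rw [ex, ey]
      exact hE a ⟨x, hx'⟩ ⟨y, hy'⟩

end Part4

section Part56
variable {n : ℕ} {K : Type}

theorem my_card_orbit (p : OrderedFiberPair n K) :
    Nat.card {q : OrderedFiberPair n K // ∃ σ : Equiv.Perm (Fin n), permSmul σ p = q}
      = Nat.factorial n := by
  have e : Equiv.Perm (Fin n) ≃ {q : OrderedFiberPair n K // ∃ σ, permSmul σ p = q} := by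
    refine Equiv.ofBijective (fun σ => ⟨permSmul σ p, σ, rfl⟩) ⟨?_, ?_⟩
    · intro σ τ h
      have h' : permSmul σ p = permSmul τ p := congrArg Subtype.val h
      have : permSmul (τ⁻¹ * σ) p = p := by
        rw [my_mul_smul, h', ← my_mul_smul, inv_mul_cancel, my_one_smul]
      have h1 : τ⁻¹ * σ = 1 := my_free _ _ this
      have := congrArg (fun ρ => τ * ρ) h1
      simpa [mul_assoc] using this
    · rintro ⟨q, σ, rfl⟩
      exact ⟨σ, rfl⟩
  rw [← Nat.card_congr e, Nat.card_eq_fintype_card, Fintype.card_perm, Fintype.card_fin]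

theorem my_quot [Fintype K] :
    Nonempty
      (Quot (fun p q : OrderedFiberPair n K => ∃ σ : Equiv.Perm (Fin n), permSmul σ p = q)
        ≃ Sym K n) := by
  have hcardn : ∀ f : Fin n → K, Multiset.card (Multiset.map f Finset.univ.val) = n := by
    intro f; simp
  refine ⟨Equiv.ofBijective
    (Quot.lift (fun p => (⟨Multiset.map p.1 Finset.univ.val, hcardn p.1⟩ : Sym K n)) ?_)
    ⟨?_, ?_⟩⟩
  · intro p q h
    exact Subtype.ext ((my_orbit p q).mp h)
  · refine Quot.ind fun p => Quot.ind fun q h => ?_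
    exact Quot.sound ((my_orbit p q).mpr (Subtype.ext_iff.mp h))
  · rintro ⟨m, hm⟩
    obtain ⟨f, hf⟩ := exists_fn m hm
    exact ⟨Quot.mk _ ⟨f, fun a => defaultOrder f a⟩, Subtype.ext hf⟩

end Part56

/-- The map `(σ, p) ↦ σ • p` is an action of the symmetric group of
`Fin n` on the set of pairs `(f, ω)`; this action is free; two pairs lie in the same orbit
iff the functions have the same multiset of values; consequently every orbit has exactly
`n!` elements, and the orbits are in bijection with multisets of size `n` in `K`. -/
theorem permSmul_free_orbits (n : ℕ) (K : Type) [Fintype K] :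
    (∀ p : OrderedFiberPair n K, permSmul 1 p = p) ∧
    (∀ (σ τ : Equiv.Perm (Fin n)) (p : OrderedFiberPair n K),
      permSmul (σ * τ) p = permSmul σ (permSmul τ p)) ∧
    (∀ (σ : Equiv.Perm (Fin n)) (p : OrderedFiberPair n K),
      permSmul σ p = p → σ = 1) ∧
    (∀ p q : OrderedFiberPair n K,
      (∃ σ : Equiv.Perm (Fin n), permSmul σ p = q) ↔
        Multiset.map p.1 Finset.univ.val = Multiset.map q.1 Finset.univ.val) ∧
    (∀ p : OrderedFiberPair n K,
      Nat.card {q : OrderedFiberPair n K // ∃ σ : Equiv.Perm (Fin n), permSmul σ p = q}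
        = Nat.factorial n) ∧
    Nonempty
      (Quot (fun p q : OrderedFiberPair n K => ∃ σ : Equiv.Perm (Fin n), permSmul σ p = q)
        ≃ Sym K n) :=
  ⟨my_one_smul, my_mul_smul, my_free, my_orbit, my_card_orbit, my_quot⟩
end

section
/- For all natural numbers n and q, the sum over all permutations σ of Fin n of q raised to the number of cycles of σ (counting fixed points as cycles, i.e. the number of orbits of σ acting on Fin n) equals the rising factorial q(q+1)⋯(q+n−1). -/
open Equiv Equiv.Perm Finset

section Aux

variable {α : Type*} [DecidableEq α] [Fintype α]

/-- The number of fixed points of a permutation. -/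
def nfix (σ : Perm α) : ℕ := (Finset.univ.filter fun i => σ i = i).card

lemma nfix_add_support (σ : Perm α) : nfix σ + σ.support.card = Fintype.card α := by
  rw [nfix, Equiv.Perm.support, ← Finset.card_univ]
  exact Finset.card_filter_add_card_filter_not _

lemma support_card_le (σ : Perm α) : σ.support.card ≤ Fintype.card α := by
  rw [← Finset.card_univ]; exact Finset.card_le_card (Finset.subset_univ _)

/-- Multiplying a cycle `c` by `swap a p`, where `a` is fixed by `c` and `p` is moved,
inserts `a` into the cycle. -/
lemma extend_cycle {c : Perm α} {a p : α} (hc : c.IsCycle) (hp : c p ≠ p) (ha : c a = a) :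
    (swap a p * c).IsCycle ∧ (swap a p * c).support = insert a c.support := by
  set g := swap a p * c with hg
  have hpa : p ≠ a := fun h => hp (by rw [h]; exact ha)
  have hanotin : a ∉ c.support := by simp [Equiv.Perm.mem_support, ha]
  have hpmem : p ∈ c.support := Equiv.Perm.mem_support.2 hp
  have hmem : ∀ k : ℕ, (c ^ k) p ∈ c.support := fun k => Equiv.Perm.pow_apply_mem_support.2 hpmem
  -- key power computation
  have K : ∀ k : ℕ, (∀ j < k, (c ^ (j + 1)) p ≠ p) → (g ^ k) p = (c ^ k) p := by
    intro k
    induction k with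
    | zero => simp
    | succ k ih =>
      intro h
      rw [pow_succ', Equiv.Perm.mul_apply, ih (fun j hj => h j (Nat.lt_succ_of_lt hj)), hg,
        Equiv.Perm.mul_apply, ← Equiv.Perm.mul_apply c, ← pow_succ']
      exact swap_apply_of_ne_of_ne (fun hh => hanotin (hh ▸ hmem (k + 1)))
        (h k (Nat.lt_succ_self k))
  -- from p we can reach any moved point of c using powers of g
  have SC : ∀ y ∈ c.support, ∃ k : ℕ, (g ^ k) p = y := by
    intro y hy
    have hex : ∃ k : ℕ, (c ^ k) p = y := hc.exists_pow_eq hp (Equiv.Perm.mem_support.1 hy)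
    classical
    set k := Nat.find hex with hk
    refine ⟨k, ?_⟩
    have hkk : (c ^ k) p = y := Nat.find_spec hex
    rw [← hkk]
    apply K
    intro j hj hcon
    have hjk : j + 1 ≤ k := hj
    have : (c ^ (k - (j + 1))) p = y := by
      conv_lhs => rw [← hcon, ← Equiv.Perm.mul_apply, ← pow_add, Nat.sub_add_cancel hjk]
      exact hkk
    exact Nat.find_min hex
      (Nat.sub_lt (Nat.lt_of_lt_of_le (Nat.succ_pos j) hjk) (Nat.succ_pos j)) this
  constructor
  · -- IsCycle
    have hgp : g p = c p := by
      rw [hg, Equiv.Perm.mul_apply]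
      exact swap_apply_of_ne_of_ne (fun h => hanotin (h ▸ Equiv.Perm.apply_mem_support.2 hpmem)) hp
    refine ⟨p, by rw [hgp]; exact hp, fun y hy => ?_⟩
    by_cases hya : y = a
    · -- reach a : go to c⁻¹ p then one more step
      have hinv : c⁻¹ p ∈ c.support := by
        rw [← Equiv.Perm.apply_mem_support, show c (c⁻¹ p) = p from c.apply_symm_apply p]; exact hpmem
      obtain ⟨k, hk⟩ := SC (c⁻¹ p) hinv
      refine ⟨((k : ℤ) + 1), ?_⟩
      have h2 : (g ^ (k + 1) : Perm α) p = a := by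
        rw [pow_succ', Equiv.Perm.mul_apply, hk, hg, Equiv.Perm.mul_apply,
          show c (c⁻¹ p) = p from c.apply_symm_apply p, swap_apply_right]
      rw [hya, show ((k : ℤ) + 1) = ((k + 1 : ℕ) : ℤ) by push_cast; ring, zpow_natCast]
      exact h2
    · have hyc : y ∈ c.support := by
        by_contra hns
        have hcy : c y = y := by simpa [Equiv.Perm.mem_support] using hns
        have hyp : y ≠ p := fun h => hp (h ▸ hcy)
        apply hy
        rw [hg, Equiv.Perm.mul_apply, hcy]
        exact swap_apply_of_ne_of_ne hya hyp
      obtain ⟨k, hk⟩ := SC y hyc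
      exact ⟨(k : ℤ), by rw [zpow_natCast, hk]⟩
  · -- support
    ext x
    simp only [Finset.mem_insert, Equiv.Perm.mem_support]
    constructor
    · intro hx
      by_cases hxa : x = a
      · exact Or.inl hxa
      · refine Or.inr ?_
        by_contra hcx
        have hcx : c x = x := by simpa using hcx
        have hxp : x ≠ p := fun h => hp (h ▸ hcx)
        exact hx (by rw [hg, Equiv.Perm.mul_apply, hcx]; exact swap_apply_of_ne_of_ne hxa hxp)
    · rintro (rfl | hx)
      · rw [hg, Equiv.Perm.mul_apply, ha, swap_apply_left]
        exact hpa
      · intro hgx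
        rw [hg, Equiv.Perm.mul_apply] at hgx
        rcases eq_or_ne (c x) x with h | h
        · exact hx h
        by_cases h1 : c x = a
        · rw [h1, swap_apply_left] at hgx
          subst hgx
          exact hanotin (h1 ▸ Equiv.Perm.apply_mem_support.2 hpmem)
        by_cases h2 : c x = p
        · rw [h2, swap_apply_right] at hgx
          exact hx (hgx ▸ ha)
        · rw [swap_apply_of_ne_of_ne h1 h2] at hgx
          exact hx hgx

/-- Multiplying by `swap a p`, where `a` is a fixed point, decreases the number of
orbits (cycles plus fixed points) by exactly one. -/
lemma cyc_count_swap_mul {τ : Perm α} {a p : α} (ha : τ a = a) (hpa : p ≠ a) :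
    ((swap a p * τ).cycleType.card + nfix (swap a p * τ)) + 1
      = τ.cycleType.card + nfix τ := by
  have hanotin : a ∉ τ.support := by simp [Equiv.Perm.mem_support, ha]
  by_cases htp : τ p = p
  · -- swap and τ are disjoint
    have hd : Equiv.Perm.Disjoint (swap a p) τ := by
      intro x
      by_cases hx : x = a
      · exact Or.inr (hx ▸ ha)
      by_cases hx' : x = p
      · exact Or.inr (hx' ▸ htp)
      · exact Or.inl (swap_apply_of_ne_of_ne hx hx')
    have hct : (swap a p * τ).cycleType = (swap a p).cycleType + τ.cycleType :=
      hd.cycleType_mul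
    have hcs : Multiset.card (swap a p).cycleType = 1 :=
      Equiv.Perm.card_cycleType_eq_one.2 (isCycle_swap hpa.symm)
    have hsup : (swap a p * τ).support.card = 2 + τ.support.card := by
      rw [hd.card_support_mul, card_support_swap hpa.symm]
    have h1 := nfix_add_support (swap a p * τ)
    have h2 := nfix_add_support τ
    have h3 := support_card_le (swap a p * τ)
    rw [hct, Multiset.card_add, hcs]
    omega
  · -- p is moved by τ: extend the cycle of p by a
    set cc := τ.cycleOf p with hcc
    have hccm : cc ∈ τ.cycleFactorsFinset :=
      Equiv.Perm.cycleOf_mem_cycleFactorsFinset_iff.2 (Equiv.Perm.mem_support.2 htp)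
    have hcyc : cc.IsCycle := (Equiv.Perm.mem_cycleFactorsFinset_iff.1 hccm).1
    have hccp : cc p ≠ p := by rw [hcc, Equiv.Perm.cycleOf_apply_self]; exact htp
    have hsuple : cc.support ⊆ τ.support := Equiv.Perm.mem_cycleFactorsFinset_support_le hccm
    have hcca : cc a = a := by
      by_contra h
      exact hanotin (hsuple (Equiv.Perm.mem_support.2 h))
    set d := τ * cc⁻¹ with hd
    have hdisj : Equiv.Perm.Disjoint d cc :=
      Equiv.Perm.disjoint_mul_inv_of_mem_cycleFactorsFinset hccm
    have hτ : d * cc = τ := by rw [hd]; group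
    have hinva : cc⁻¹ a = a := by
      conv_lhs => rw [← hcca]
      exact cc.symm_apply_apply a
    have hda : d a = a := by rw [hd, Equiv.Perm.mul_apply, hinva, ha]
    have hdp : d p = p := (hdisj p).resolve_right hccp
    have hcomm : Commute (swap a p) d := by
      refine Equiv.Perm.Disjoint.commute ?_
      intro x
      by_cases hx : x = a
      · exact Or.inr (hx ▸ hda)
      by_cases hx' : x = p
      · exact Or.inr (hx' ▸ hdp)
      · exact Or.inl (swap_apply_of_ne_of_ne hx hx')
    set g := swap a p * cc with hg
    have hkey : swap a p * τ = d * g := by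
      rw [← hτ, ← mul_assoc, hcomm.eq, mul_assoc, hg]
    obtain ⟨hgcyc, hgsupp⟩ := extend_cycle hcyc hccp hcca
    have hdg : Equiv.Perm.Disjoint d g := by
      intro x
      by_cases hxd : d x = x
      · exact Or.inl hxd
      · have hcx : cc x = x := (hdisj x).resolve_left hxd
        have hxa : x ≠ a := fun h => hxd (h ▸ hda)
        have hxp : x ≠ p := fun h => hxd (h ▸ hdp)
        exact Or.inr (by rw [hg, Equiv.Perm.mul_apply, hcx, swap_apply_of_ne_of_ne hxa hxp])
    have hcard1 : (swap a p * τ).cycleType.card = d.cycleType.card + 1 := by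
      rw [hkey, hdg.cycleType_mul, Multiset.card_add, Equiv.Perm.card_cycleType_eq_one.2 hgcyc]
    have hcard2 : τ.cycleType.card = d.cycleType.card + 1 := by
      rw [← hτ, hdisj.cycleType_mul, Multiset.card_add, Equiv.Perm.card_cycleType_eq_one.2 hcyc]
    have hccanotin : a ∉ cc.support := by simp [Equiv.Perm.mem_support, hcca]
    have hsup1 : (swap a p * τ).support.card = d.support.card + (cc.support.card + 1) := by
      rw [hkey, hdg.card_support_mul, hgsupp, Finset.card_insert_of_notMem hccanotin]
    have hsup2 : τ.support.card = d.support.card + cc.support.card := by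
      rw [← hτ, hdisj.card_support_mul]
    have h1 := nfix_add_support (swap a p * τ)
    have h2 := nfix_add_support τ
    have h3 := support_card_le (swap a p * τ)
    omega

end Aux

/-- `Fin n` is equivalent to the nonzero elements of `Fin (n+1)`. -/
def finSuccEquivNeZero (n : ℕ) : Fin n ≃ {i : Fin (n + 1) // i ≠ 0} where
  toFun x := ⟨x.succ, Fin.succ_ne_zero x⟩
  invFun i := i.1.pred i.2
  left_inv x := by simp
  right_inv i := by cases i; simp

lemma decompose_zero {n : ℕ} (e : Perm (Fin n)) :
    Equiv.Perm.decomposeFin.symm (0, e) = e.extendDomain (finSuccEquivNeZero n) := by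
  refine Equiv.ext fun x => ?_
  refine Fin.cases ?_ (fun y => ?_) x
  · rw [Equiv.Perm.decomposeFin_symm_apply_zero,
      Equiv.Perm.extendDomain_apply_not_subtype _ _ (by simp)]
  · rw [Equiv.Perm.decomposeFin_symm_apply_succ, Equiv.swap_self, Equiv.refl_apply]
    exact (Equiv.Perm.extendDomain_apply_image (e := e) (f := finSuccEquivNeZero n) y).symm

lemma cycleType_decompose_zero {n : ℕ} (e : Perm (Fin n)) :
    (Equiv.Perm.decomposeFin.symm (0, e)).cycleType = e.cycleType := by
  rw [decompose_zero, Equiv.Perm.cycleType_extendDomain]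

lemma nfix_decompose_zero {n : ℕ} (e : Perm (Fin n)) :
    nfix (Equiv.Perm.decomposeFin.symm (0, e)) = nfix e + 1 := by
  rw [nfix, nfix, Finset.card_filter, Finset.card_filter, Fin.sum_univ_succ]
  rw [if_pos (Equiv.Perm.decomposeFin_symm_apply_zero 0 e)]
  have h : ∀ y : Fin n,
      (if Equiv.Perm.decomposeFin.symm (0, e) y.succ = y.succ then 1 else 0)
        = if e y = y then 1 else 0 := by
    intro y
    rw [Equiv.Perm.decomposeFin_symm_apply_succ, Equiv.swap_self, Equiv.refl_apply]
    simp [Fin.succ_inj]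
  simp only [h]
  omega

lemma decompose_eq_swap_mul {n : ℕ} (e : Perm (Fin n)) (p : Fin (n + 1)) :
    Equiv.Perm.decomposeFin.symm (p, e)
      = Equiv.swap 0 p * Equiv.Perm.decomposeFin.symm (0, e) := by
  refine Equiv.ext fun x => ?_
  refine Fin.cases ?_ (fun y => ?_) x
  · rw [Equiv.Perm.decomposeFin_symm_apply_zero, Equiv.Perm.mul_apply,
      Equiv.Perm.decomposeFin_symm_apply_zero, swap_apply_left]
  · rw [Equiv.Perm.decomposeFin_symm_apply_succ, Equiv.Perm.mul_apply,
      Equiv.Perm.decomposeFin_symm_apply_succ, Equiv.swap_self, Equiv.refl_apply]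

lemma cyc_decompose {n : ℕ} (e : Perm (Fin n)) (p : Fin (n + 1)) :
    (Equiv.Perm.decomposeFin.symm (p, e)).cycleType.card
        + nfix (Equiv.Perm.decomposeFin.symm (p, e))
      = e.cycleType.card + nfix e + (if p = 0 then 1 else 0) := by
  have hzero : (Equiv.Perm.decomposeFin.symm (0, e)).cycleType.card
      + nfix (Equiv.Perm.decomposeFin.symm (0, e)) = e.cycleType.card + nfix e + 1 := by
    rw [cycleType_decompose_zero, nfix_decompose_zero]
    omega
  by_cases hp : p = 0
  · rw [hp, if_pos rfl]; exact hzero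
  · rw [if_neg hp, decompose_eq_swap_mul]
    have h := cyc_count_swap_mul (τ := Equiv.Perm.decomposeFin.symm (0, e)) (a := (0 : Fin (n+1)))
      (p := p) (Equiv.Perm.decomposeFin_symm_apply_zero 0 e) hp
    omega

/-- For all naturals `n` and `q`, the sum over all permutations `σ` of
`Fin n` of `q` raised to the number of cycles of `σ` (counting fixed points as cycles, so
this number is `σ.cycleType.card` plus the number of fixed points of `σ`, i.e. the number
of orbits of `σ` on `Fin n`) equals the rising factorial `q(q+1)⋯(q+n−1)`. -/
theorem sum_pow_cycles_eq_ascFactorial (n q : ℕ) :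
    ∑ σ : Equiv.Perm (Fin n),
        q ^ (σ.cycleType.card + (Finset.univ.filter fun i : Fin n => σ i = i).card)
      = Nat.ascFactorial q n := by
  suffices key : ∀ m : ℕ, ∑ σ : Equiv.Perm (Fin m), q ^ (σ.cycleType.card + nfix σ)
      = Nat.ascFactorial q m from key n
  intro m
  induction m with
  | zero =>
    rw [Nat.ascFactorial_zero]
    have h1 : ∀ σ : Equiv.Perm (Fin 0), q ^ (σ.cycleType.card + nfix σ) = 1 := by
      intro σ
      have hσ : σ = 1 := Equiv.ext fun x => x.elim0
      subst hσ
      simp [nfix]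
    rw [Finset.sum_congr rfl fun σ _ => h1 σ, Finset.sum_const, smul_eq_mul, mul_one,
      Finset.card_univ]
    simp [Fintype.card_perm]
  | succ m ih =>
    rw [← Equiv.sum_comp (Equiv.Perm.decomposeFin.symm)
      (fun σ : Equiv.Perm (Fin (m+1)) => q ^ (σ.cycleType.card + nfix σ)), Fintype.sum_prod_type]
    have hterm : ∀ p : Fin (m + 1), ∀ e : Perm (Fin m),
        q ^ ((Equiv.Perm.decomposeFin.symm (p, e)).cycleType.card
            + nfix (Equiv.Perm.decomposeFin.symm (p, e)))
          = (if p = 0 then q else 1) * q ^ (e.cycleType.card + nfix e) := by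
      intro p e
      rw [cyc_decompose, pow_add, mul_comm]
      congr 1
      by_cases hp : p = 0 <;> simp [hp]
    simp only [hterm]
    have hsum : ∑ p : Fin (m + 1), (if p = 0 then q else 1) = q + m := by
      rw [← Finset.add_sum_erase _ _ (Finset.mem_univ (0 : Fin (m + 1))), if_pos rfl]
      have h2 : ∀ p ∈ Finset.univ.erase (0 : Fin (m + 1)), (if p = 0 then q else 1) = 1 :=
        fun p hp => if_neg (Finset.ne_of_mem_erase hp)
      rw [Finset.sum_congr rfl h2, Finset.sum_const, smul_eq_mul, mul_one,
        Finset.card_erase_of_mem (Finset.mem_univ _), Finset.card_univ, Fintype.card_fin]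
      omega
    simp only [← Finset.mul_sum]
    rw [← Finset.sum_mul, hsum, ih, Nat.ascFactorial_succ]
end

section
/- Let q be an odd prime power, 𝔽_q a finite field with q elements, and let i ∈ 𝔽_q[t] be a monic irreducible polynomial of degree d with i(0) ≠ 0. Let α be a root of i in the field 𝔽_{q^d} with q^d elements. Then: (a) whether α is a square in 𝔽_{q^d} does not depend on the choice of the root α (all roots of i are squares, or none is); (b) the polynomial i(t²) (the composition of i with t²) is irreducible in 𝔽_q[t] if and only if α is not a square in 𝔽_{q^d}; and (c) if α is a square in 𝔽_{q^d}, then there exists a monic irreducible polynomial h ∈ 𝔽_q[t] of degree d with i(t²) = (−1)^d · h(t) · h(−t). -/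
open Polynomial IntermediateField

/-- Auxiliary: if `p` is monic irreducible over a finite field `F`, and `S` is a finite field
extension of `F` with `|S| = |F| ^ deg p`, then the lift of a root yields a bijection. -/
lemma aux_lift_bijective (F : Type) [Field F] [Fintype F] (p : F[X]) (hp : Irreducible p)
    (S : Type) [Field S] [Fintype S] [Algebra F S]
    (hcardS : Fintype.card S = Fintype.card F ^ p.natDegree)
    (x : S) (hx : aeval x p = 0) :
    Function.Bijective (AdjoinRoot.liftAlgHom p (Algebra.ofId F S) x hx) := by
  haveI : Fact (Irreducible p) := ⟨hp⟩
  haveI : Module.Finite F (AdjoinRoot p) := PowerBasis.finite (AdjoinRoot.powerBasis hp.ne_zero)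
  haveI : Finite (AdjoinRoot p) := Module.finite_of_finite F
  haveI : Fintype (AdjoinRoot p) := Fintype.ofFinite _
  have hfr : Module.finrank F (AdjoinRoot p) = p.natDegree := by
    rw [(AdjoinRoot.powerBasis hp.ne_zero).finrank, AdjoinRoot.powerBasis_dim]
  have hcA : Fintype.card (AdjoinRoot p) = Fintype.card F ^ p.natDegree := by
    rw [Module.card_eq_pow_finrank (K := F), hfr]
  rw [Fintype.bijective_iff_injective_and_card]
  exact ⟨(AdjoinRoot.liftAlgHom p (Algebra.ofId F S) x hx).toRingHom.injective, by rw [hcA, hcardS]⟩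

/-- Auxiliary: two roots of the same monic irreducible polynomial of full degree in a finite
field are conjugate by an `F`-algebra automorphism. -/
lemma aux_conj (F : Type) [Field F] [Fintype F] (p : F[X]) (hp : Irreducible p)
    (S : Type) [Field S] [Fintype S] [Algebra F S]
    (hcardS : Fintype.card S = Fintype.card F ^ p.natDegree)
    (x y : S) (hx : aeval x p = 0) (hy : aeval y p = 0) :
    ∃ σ : S ≃ₐ[F] S, σ x = y := by
  let ex := AlgEquiv.ofBijective _ (aux_lift_bijective F p hp S hcardS x hx)
  let ey := AlgEquiv.ofBijective _ (aux_lift_bijective F p hp S hcardS y hy)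
  refine ⟨ex.symm.trans ey, ?_⟩
  have hx' : ex (AdjoinRoot.root p) = x := AdjoinRoot.liftAlgHom_root _ _ _ hx
  have hroot : ex.symm x = AdjoinRoot.root p := by rw [← hx', AlgEquiv.symm_apply_apply]
  show ey (ex.symm x) = y
  rw [hroot]
  exact AdjoinRoot.liftAlgHom_root _ _ _ hy

/-- Auxiliary: a monic divisor of a monic polynomial of at most its degree equals it. -/
lemma aux_monic_eq_of_dvd {F : Type} [Field F] {p q : F[X]} (hp : p.Monic) (hq : q.Monic)
    (hdvd : p ∣ q) (hdeg : q.natDegree ≤ p.natDegree) : p = q := by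
  obtain ⟨c, rfl⟩ := hdvd
  have hc : c ≠ 0 := by
    rintro rfl
    simpa using hq.ne_zero
  have hdc : c.natDegree = 0 := by
    have := natDegree_mul hp.ne_zero hc
    omega
  obtain ⟨a, rfl⟩ := natDegree_eq_zero.mp hdc
  have h1 : p.leadingCoeff * a = 1 := by
    have := hq.leadingCoeff
    rwa [leadingCoeff_mul, leadingCoeff_C] at this
  rw [hp.leadingCoeff, one_mul] at h1
  rw [h1, map_one, mul_one]

/-- Let `𝔽_q` be a finite field of odd order `q`, `i ∈ 𝔽_q[t]` monic
irreducible of degree `d` with `i(0) ≠ 0`, and `α` a root of `i` in the field `E = 𝔽_{q^d}`.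
Then: (a) whether a root of `i` in `E` is a square does not depend on the root;
(b) `i(t²)` is irreducible in `𝔽_q[t]` iff `α` is not a square in `E`; and
(c) if `α` is a square in `E`, there is a monic irreducible `h ∈ 𝔽_q[t]` of degree `d` with
`i(t²) = (−1)^d · h(t) · h(−t)`. -/
theorem even_substitution_factorization (q d : ℕ) (hq : Odd q)
    (F : Type) [Field F] [Fintype F] (hcard : Fintype.card F = q)
    (i : Polynomial F) (hmonic : i.Monic) (hirr : Irreducible i) (hd : i.natDegree = d)
    (h0 : i.eval 0 ≠ 0)
    (E : Type) [Field E] [Fintype E] [Algebra F E] (hE : Fintype.card E = q ^ d)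
    (α : E) (hα : Polynomial.aeval α i = 0) :
    (∀ β : E, Polynomial.aeval β i = 0 → (IsSquare α ↔ IsSquare β)) ∧
    (Irreducible (i.comp (Polynomial.X ^ 2)) ↔ ¬ IsSquare α) ∧
    (IsSquare α → ∃ h : Polynomial F, h.Monic ∧ Irreducible h ∧ h.natDegree = d ∧
      i.comp (Polynomial.X ^ 2)
        = Polynomial.C ((-1 : F) ^ d) * h * h.comp (-Polynomial.X)) := by
  have d_pos : 0 < d := hd ▸ hirr.natDegree_pos
  have hq2 : 2 ≤ q := hcard ▸ Fintype.one_lt_card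
  have hcardE : Fintype.card E = Fintype.card F ^ i.natDegree := by rw [hcard, hd, hE]
  have hfinrk : Module.finrank F E = d := by
    have := Module.card_eq_pow_finrank (K := F) (V := E)
    rw [hE, hcard] at this
    exact Nat.pow_right_injective hq2 this.symm
  -- characteristic facts
  have h2F : (2 : F) ≠ 0 := by
    intro h2
    have hdvd2 : ringChar F ∣ 2 :=
      (CharP.cast_eq_zero_iff F (ringChar F) 2).mp (by exact_mod_cast h2)
    have hprime : (ringChar F).Prime := CharP.char_is_prime F (ringChar F)
    have hchar2 : ringChar F = 2 := by
      have := Nat.le_of_dvd (by norm_num) hdvd2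
      have := hprime.two_le
      omega
    obtain ⟨n, hp2, hcard2⟩ := FiniteField.card F (ringChar F)
    rw [hchar2, hcard] at hcard2
    have : Even q := by
      rw [hcard2]
      exact (Nat.even_pow' (by positivity)).mpr even_two
    exact (Nat.not_even_iff_odd.mpr hq) this
  have halg : Function.Injective (algebraMap F E) := (algebraMap F E).injective
  have h2E : (2 : E) ≠ 0 := by
    intro h2
    apply h2F
    apply halg
    rw [map_zero, map_ofNat]
    exact_mod_cast h2
  have hα0 : α ≠ 0 := by
    rintro rfl
    rw [aeval_def, eval₂_at_zero] at hα
    exact h0 (by rw [← coeff_zero_eq_eval_zero]; exact halg (by simpa using hα))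
  have hmini : minpoly F α = i := (minpoly.eq_of_irreducible_of_monic hirr hα hmonic).symm
  have jmonic : (i.comp (X ^ 2 : F[X])).Monic :=
    hmonic.comp (monic_X_pow 2) (by simp)
  have jdeg : (i.comp (X ^ 2 : F[X])).natDegree = 2 * d := by
    rw [natDegree_comp, natDegree_X_pow, hd, mul_comm]
  have jne : (i.comp (X ^ 2 : F[X])) ≠ 0 := jmonic.ne_zero
  -- separability
  have hsep : i.Separable := PerfectField.separable_of_irreducible hirr
  have hder : aeval α (derivative i) ≠ 0 := by
    obtain ⟨a, b, hab⟩ := hsep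
    intro hz
    have := congrArg (aeval α) hab
    rw [map_add, map_mul, map_mul, hα, hz, mul_zero, mul_zero, add_zero, map_one] at this
    exact zero_ne_one this
  -- part (a)
  have parta : ∀ β : E, Polynomial.aeval β i = 0 → (IsSquare α ↔ IsSquare β) := by
    intro β hβ
    obtain ⟨σ, hσ⟩ := aux_conj F i hirr E hcardE α β hα hβ
    constructor
    · intro hs
      have := hs.map σ
      rwa [hσ] at this
    · intro hs
      have := hs.map σ.symm
      rwa [← hσ, AlgEquiv.symm_apply_apply] at this
  refine ⟨parta, ⟨?_, ?_⟩, ?_⟩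
  · -- irreducible → not square
    intro hjirr hsq
    obtain ⟨γ, hγ⟩ := hsq
    have hroot : aeval γ (i.comp (X ^ 2 : F[X])) = 0 := by
      rw [aeval_comp, map_pow, aeval_X, pow_two, ← hγ, hα]
    have hmj := (minpoly.eq_of_irreducible_of_monic hjirr hroot jmonic).symm
    have hle := minpoly.natDegree_le (A := F) γ
    rw [hmj, jdeg, hfinrk] at hle
    omega
  · -- not square → irreducible
    intro hnsq
    by_contra hnirr
    have jnu : ¬IsUnit (i.comp (X ^ 2 : F[X])) := by
      intro hu
      have := natDegree_eq_zero_of_isUnit hu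
      omega
    obtain ⟨f, hfirr, hfdvd⟩ := WfDvdMonoid.exists_irreducible_factor jnu jne
    -- normalize f to be monic
    have hf0 : f ≠ 0 := hfirr.ne_zero
    set m : F[X] := f * C f.leadingCoeff⁻¹ with hm
    have hmm : m.Monic := monic_mul_leadingCoeff_inv hf0
    have hu : IsUnit (C f.leadingCoeff⁻¹) :=
      isUnit_C.mpr (isUnit_iff_ne_zero.mpr (inv_ne_zero (leadingCoeff_ne_zero.mpr hf0)))
    have hassoc : Associated f m := ⟨hu.unit, by rw [IsUnit.unit_spec]⟩
    have hmirr : Irreducible m := hassoc.irreducible hfirr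
    have hmdvd : m ∣ i.comp (X ^ 2 : F[X]) := hassoc.symm.dvd.trans hfdvd
    haveI : Fact (Irreducible m) := ⟨hmirr⟩
    haveI : Module.Finite F (AdjoinRoot m) :=
      PowerBasis.finite (AdjoinRoot.powerBasis hmirr.ne_zero)
    haveI : Finite (AdjoinRoot m) := Module.finite_of_finite F
    haveI : Fintype (AdjoinRoot m) := Fintype.ofFinite _
    have hfrK : Module.finrank F (AdjoinRoot m) = m.natDegree := by
      rw [(AdjoinRoot.powerBasis hmirr.ne_zero).finrank, AdjoinRoot.powerBasis_dim]
    set ξ := AdjoinRoot.root m with hξdef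
    have hξ : aeval ξ m = 0 := by rw [AdjoinRoot.aeval_eq, AdjoinRoot.mk_self]
    have hjξ : aeval ξ (i.comp (X ^ 2 : F[X])) = 0 := by
      obtain ⟨c, hc⟩ := hmdvd
      rw [hc, map_mul, hξ, zero_mul]
    have hβ : aeval (ξ * ξ) i = 0 := by
      rw [aeval_comp, map_pow, aeval_X, pow_two] at hjξ
      exact hjξ
    have hβint : IsIntegral F (ξ * ξ) := IsIntegral.of_finite F _
    have hminβ : minpoly F (ξ * ξ) = i := (minpoly.eq_of_irreducible_of_monic hirr hβ hmonic).symm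
    have hfrβ : Module.finrank F F⟮ξ * ξ⟯ = d := by
      rw [IntermediateField.adjoin.finrank hβint, hminβ, hd]
    have htower := Module.finrank_mul_finrank F (F⟮ξ * ξ⟯) (AdjoinRoot m)
    have hdvd_d : d ∣ m.natDegree :=
      ⟨Module.finrank (F⟮ξ * ξ⟯) (AdjoinRoot m), by rw [← hfrK, ← htower, hfrβ]⟩
    have hmle : m.natDegree ≤ 2 * d := jdeg ▸ natDegree_le_of_dvd hmdvd jne
    have hm1 : 0 < m.natDegree := hmirr.natDegree_pos
    obtain ⟨k, hk⟩ := hdvd_d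
    have hk1 : 1 ≤ k := by nlinarith
    have hk2 : k ≤ 2 := by nlinarith
    interval_cases k
    · -- deg m = d : get a square root of a conjugate of α
      have hcardK : Fintype.card (AdjoinRoot m) = Fintype.card F ^ i.natDegree := by
        rw [Module.card_eq_pow_finrank (K := F), hfrK, hk, mul_one, hd]
      have hb1 := aux_lift_bijective F i hirr (AdjoinRoot m) hcardK (ξ * ξ) hβ
      have hb2 := aux_lift_bijective F i hirr E hcardE α hα
      let e1 := AlgEquiv.ofBijective _ hb1
      let e2 := AlgEquiv.ofBijective _ hb2
      let τ : AdjoinRoot m ≃ₐ[F] E := e1.symm.trans e2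
      have h1 : e1 (AdjoinRoot.root i) = ξ * ξ := AdjoinRoot.liftAlgHom_root _ _ _ hβ
      have h2 : τ (ξ * ξ) = α := by
        show e2 (e1.symm (ξ * ξ)) = α
        rw [← h1, AlgEquiv.symm_apply_apply]
        exact AdjoinRoot.liftAlgHom_root _ _ _ hα
      exact hnsq ⟨τ ξ, by rw [← h2, map_mul]⟩
    · -- deg m = 2d : j is irreducible after all
      have : m = i.comp (X ^ 2 : F[X]) :=
        aux_monic_eq_of_dvd hmm jmonic hmdvd (by omega)
      exact hnirr (this ▸ hmirr)
  · -- factorization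
    intro hsq
    obtain ⟨γ, hγ⟩ := hsq
    have hγ0 : γ ≠ 0 := by rintro rfl; exact hα0 (by simp [hγ])
    have hγint : IsIntegral F γ := IsIntegral.of_finite F γ
    have hαint : IsIntegral F α := IsIntegral.of_finite F α
    have hfrα : Module.finrank F F⟮α⟯ = d := by
      rw [IntermediateField.adjoin.finrank hαint, hmini, hd]
    -- the degree of the minimal polynomial of any square root of α is d
    have degkey : ∀ δ : E, α = δ * δ → (minpoly F δ).natDegree = d := by
      intro δ hδ
      have hδint : IsIntegral F δ := IsIntegral.of_finite F δ
      have hle : (minpoly F δ).natDegree ≤ d := hfinrk ▸ minpoly.natDegree_le (A := F) δ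
      have hsub : F⟮α⟯ ≤ F⟮δ⟯ := by
        rw [IntermediateField.adjoin_simple_le_iff, hδ]
        exact mul_mem (IntermediateField.mem_adjoin_simple_self F δ)
          (IntermediateField.mem_adjoin_simple_self F δ)
      have hge : d ≤ (minpoly F δ).natDegree := by
        have hmono := Submodule.finrank_mono
          (show F⟮α⟯.toSubalgebra.toSubmodule ≤ F⟮δ⟯.toSubalgebra.toSubmodule from hsub)
        rw [show Module.finrank F F⟮α⟯.toSubalgebra.toSubmodule = Module.finrank F F⟮α⟯ from rfl,
          show Module.finrank F F⟮δ⟯.toSubalgebra.toSubmodule = Module.finrank F F⟮δ⟯ from rfl,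
          hfrα, IntermediateField.adjoin.finrank hδint] at hmono
        exact hmono
      omega
    set h : F[X] := minpoly F γ with hh
    have hhm : h.Monic := minpoly.monic hγint
    have hhirr : Irreducible h := minpoly.irreducible hγint
    have hdeg : h.natDegree = d := degkey γ hγ
    set g : F[X] := minpoly F (-γ) with hg
    have hγneg : α = (-γ) * (-γ) := by rw [neg_mul_neg]; exact hγ
    have hgm : g.Monic := minpoly.monic (IsIntegral.of_finite F _)
    have hgirr : Irreducible g := minpoly.irreducible (IsIntegral.of_finite F _)
    have hdegg : g.natDegree = d := degkey (-γ) hγneg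
    have hjγ : aeval γ (i.comp (X ^ 2 : F[X])) = 0 := by
      rw [aeval_comp, map_pow, aeval_X, pow_two, ← hγ, hα]
    have hjγ' : aeval (-γ) (i.comp (X ^ 2 : F[X])) = 0 := by
      rw [aeval_comp, map_pow, aeval_X, neg_sq, pow_two, ← hγ, hα]
    have hhdvd : h ∣ i.comp (X ^ 2 : F[X]) := minpoly.dvd F γ hjγ
    have hgdvd : g ∣ i.comp (X ^ 2 : F[X]) := minpoly.dvd F (-γ) hjγ'
    -- key: g = ± h(-X)
    have hcompdeg : (h.comp (-X : F[X])).natDegree = d := by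
      rw [natDegree_comp, natDegree_neg, natDegree_X, mul_one, hdeg]
    have hg'monic : (C ((-1 : F) ^ d) * h.comp (-X)).Monic := by
      have hlc : (h.comp (-X : F[X])).leadingCoeff = (-1 : F) ^ d := by
        rw [leadingCoeff_comp (by simp), hhm.leadingCoeff, one_mul, leadingCoeff_neg,
          leadingCoeff_X, hdeg]
      rw [Monic, leadingCoeff_mul, leadingCoeff_C, hlc, ← mul_pow]
      norm_num
    have hg'deg : (C ((-1 : F) ^ d) * h.comp (-X)).natDegree = d := by
      rw [natDegree_C_mul (pow_ne_zero _ (neg_ne_zero.mpr (one_ne_zero))), hcompdeg]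
    have hg'root : aeval (-γ) (C ((-1 : F) ^ d) * h.comp (-X)) = 0 := by
      rw [map_mul, aeval_comp, map_neg, aeval_X, neg_neg, minpoly.aeval, mul_zero]
    have hkey : g = C ((-1 : F) ^ d) * h.comp (-X) :=
      aux_monic_eq_of_dvd hgm hg'monic (minpoly.dvd F (-γ) hg'root) (by rw [hg'deg, hdegg])
    by_cases hgh : h = g
    · exfalso
      have hcardh : Fintype.card E = Fintype.card F ^ h.natDegree := by
        rw [hdeg, hcard, hE]
      obtain ⟨σ, hσ⟩ := aux_conj F h hhirr E hcardh γ (-γ) (minpoly.aeval F γ)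
        (by rw [hgh]; exact minpoly.aeval F (-γ))
      have hT : F⟮α⟯ = ⊤ := by
        apply IntermediateField.eq_of_le_of_finrank_eq le_top
        rw [hfrα, IntermediateField.finrank_top', hfinrk]
      have hσα : σ α = α := by rw [hγ, map_mul, hσ, neg_mul_neg]
      have hγmem : γ ∈ Algebra.adjoin F {α} := by
        rw [← IntermediateField.adjoin_simple_toSubalgebra_of_isAlgebraic hαint.isAlgebraic]
        show γ ∈ F⟮α⟯
        rw [hT]; trivial
      rw [Algebra.adjoin_singleton_eq_range_aeval] at hγmem
      obtain ⟨P, hP⟩ := hγmem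
      have hfix : σ γ = γ := by
        have hP' : (aeval α) P = γ := hP
        have e := Polynomial.aeval_algHom_apply σ α P
        rw [hσα, hP'] at e
        exact e.symm
      rw [hσ] at hfix
      have h2γ : (2 : E) * γ = 0 := by linear_combination -hfix
      exact hγ0 ((mul_eq_zero.mp h2γ).resolve_left h2E)
    · have hnd : ¬ h ∣ g := fun hdvd => hgh (aux_monic_eq_of_dvd hhm hgm hdvd (by omega))
      have hco : IsCoprime h g := (hhirr.coprime_iff_not_dvd).mpr hnd
      have hmul : h * g ∣ i.comp (X ^ 2 : F[X]) := hco.mul_dvd hhdvd hgdvd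
      have heq : h * g = i.comp (X ^ 2 : F[X]) :=
        aux_monic_eq_of_dvd (hhm.mul hgm) jmonic hmul
          (by rw [jdeg, natDegree_mul hhm.ne_zero hgm.ne_zero, hdeg, hdegg]; ring_nf; omega)
      refine ⟨h, hhm, hhirr, hdeg, ?_⟩
      rw [← heq, hkey]
      ring
end
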